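/- arXiv:1905.00570 — 12 statements merged into one kernel-verified Lean document; each statement's English description precedes it below -/
import Mathlib

section
/- Let s, k be positive integers and define L(s,k) = ⋃_{j≥0} {2i−1+2sj : jk+1 ≤ i ≤ ⌊s/2⌋}. If x is a positive odd integer with x > 2s and x − 2t ∈ L(s,k) for every t with s ≤ t ≤ s+k, then x ∈ L(s,k). -/
open Relation

/-- The set L(s,k) = ⋃_j {2i−1+2sj : jk+1 ≤ i ≤ ⌊s/2⌋}. -/
def Lset (s k : ℕ) : Set ℕ :=
  {x | ∃ j i : ℕ, j * k + 1 ≤ i ∧ i ≤ s / 2 ∧ x = 2 * i - 1 + 2 * s * j}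

/-- The set R(s,k) = ⋃_j {2i−1+2sj : jk+⌈(s+k)/2⌉+1 ≤ i ≤ s}. -/
def Rset (s k : ℕ) : Set ℕ :=
  {x | ∃ j i : ℕ, j * k + (s + k + 1) / 2 + 1 ≤ i ∧ i ≤ s ∧ x = 2 * i - 1 + 2 * s * j}

def Pset (s k : ℕ) : Set ℕ := Lset s k ∪ Rset s k

/-- Cover relation of P(s,k): y covers x iff y = x + 2s + 2t, 0 ≤ t ≤ k. -/
def Pcov (s k : ℕ) (x y : ℕ) : Prop :=
  x ∈ Pset s k ∧ y ∈ Pset s k ∧ ∃ t ≤ k, y = x + 2 * s + 2 * t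

/-- Order of P(s,k): reflexive-transitive closure of the cover relation. -/
def Ple (s k : ℕ) : ℕ → ℕ → Prop := ReflTransGen (Pcov s k)

def L'set (s k : ℕ) : Set (ℚ × ℤ) :=
  {p | ∃ j i : ℕ, j * k + 1 ≤ i ∧ i ≤ s / 2 ∧
    p = ((i : ℚ) - (k : ℚ) / 2 * (j : ℚ), (j : ℤ))}

def R'set (s k : ℕ) : Set (ℚ × ℤ) :=
  {p | ∃ j i : ℕ, j * k + (s + k + 1) / 2 + 1 ≤ i ∧ i ≤ s ∧
    p = ((s : ℚ) + 1 - (i : ℚ) + (k : ℚ) / 2 * ((j : ℚ) + 1), -(j : ℤ) - 1)}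

def P'set (s k : ℕ) : Set (ℚ × ℤ) := L'set s k ∪ R'set s k

/-- Cover relation of P'(s,k): q covers p. -/
def P'cov (s k : ℕ) (p q : ℚ × ℤ) : Prop :=
  (p ∈ L'set s k ∧ q ∈ L'set s k ∧ |q.1 - p.1| ≤ (k : ℚ) / 2 ∧ q.2 = p.2 + 1) ∨
  (p ∈ R'set s k ∧ q ∈ R'set s k ∧ |q.1 - p.1| ≤ (k : ℚ) / 2 ∧ q.2 = p.2 - 1)

def P'le (s k : ℕ) : ℚ × ℤ → ℚ × ℤ → Prop := ReflTransGen (P'cov s k)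

/-- Order ideals of P'(s,k). -/
def IsIdealP' (s k : ℕ) (I : Set (ℚ × ℤ)) : Prop :=
  I ⊆ P'set s k ∧ ∀ q ∈ I, ∀ p, P'le s k p q → p ∈ I

/-- No two elements (a,0), (a',−1) with |a−a'| ≤ k/2. -/
def NoClosePair (k : ℕ) (I : Set (ℚ × ℤ)) : Prop :=
  ¬ ∃ a a' : ℚ, (a, (0 : ℤ)) ∈ I ∧ (a', (-1 : ℤ)) ∈ I ∧ |a - a'| ≤ (k : ℚ) / 2

def Jset (s k : ℕ) : Set (Set (ℚ × ℤ)) :=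
  {I | IsIdealP' s k I ∧ NoClosePair k I}

/-- The conjugate partition: number of parts of f exceeding j. -/
noncomputable def conj (f : ℕ → ℕ) (j : ℕ) : ℕ := Set.ncard {i | j < f i}

/-- A partition, as a weakly decreasing function ℕ → ℕ that is eventually 0. -/
def IsPartitionFun (f : ℕ → ℕ) : Prop := Antitone f ∧ ∃ N, f N = 0

def SelfConj (f : ℕ → ℕ) : Prop := ∀ j, f j = conj f j

/-- Hook length of the cell in row i, column j (0-indexed, valid when j < f i). -/
noncomputable def hook (f : ℕ → ℕ) (i j : ℕ) : ℕ := (f i - j) + (conj f j - i) - 1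

/-- f is a t-core: no hook length is divisible by t. -/
def IsTCore (t : ℕ) (f : ℕ → ℕ) : Prop := ∀ i j, j < f i → ¬ (t ∣ hook f i j)

/-- The set of main-diagonal hook lengths of f. -/
def MD (f : ℕ → ℕ) : Set ℕ := {h | ∃ i, i < f i ∧ h = hook f i i}

/-- Steps of a ballot (s,k)-path, recorded as (width in half-units, height change):
up = (k/2,1), down = (k/2,−1), horizontal = (ℓ,0) for 1 ≤ ℓ < k. -/
def ValidStep (k : ℕ) (p : ℕ × ℤ) : Prop :=
  (p.1 = k ∧ (p.2 = 1 ∨ p.2 = -1)) ∨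
  (p.2 = 0 ∧ ∃ l : ℕ, 1 ≤ l ∧ l < k ∧ p.1 = 2 * l)

/-- Free ballot (s,k)-path, with total width w in half-units (w = 2s) and height n. -/
def IsFreeBallot (k w : ℕ) (n : ℤ) (P : List (ℕ × ℤ)) : Prop :=
  (∀ p ∈ P, ValidStep k p) ∧ (P.map Prod.fst).sum = w ∧ (P.map Prod.snd).sum = n

/-- Ballot (s,k)-path: a free ballot path that never goes below the x-axis. -/
def IsBallot (k w : ℕ) (n : ℤ) (P : List (ℕ × ℤ)) : Prop :=
  IsFreeBallot k w n P ∧ ∀ Q, Q <+: P → 0 ≤ (Q.map Prod.snd).sum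

/-- A path is symmetric if it equals its reverse complement. -/
def SymPath (P : List (ℕ × ℤ)) : Prop :=
  P = P.reverse.map (fun p => (p.1, -p.2))

/-- The path starts with a horizontal or a down step. -/
def StartsHD (P : List (ℕ × ℤ)) : Prop :=
  ∃ p rest, P = p :: rest ∧ p.2 ≠ 1

lemma uniq_aux (s a b p q : ℕ) (ha : a < 2*s) (hb : b < 2*s)
    (h : a + 2*s*p = b + 2*s*q) : a = b ∧ p = q := by
  rcases Nat.lt_trichotomy p q with hpq | rfl | hpq
  · exfalso
    obtain ⟨d, rfl⟩ := Nat.exists_eq_add_of_lt hpq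
    have h2 : 2*s*(p+d+1) = 2*s*p + 2*s*d + 2*s := by ring
    have h3 : 0 ≤ 2*s*d := Nat.zero_le _
    omega
  · omega
  · exfalso
    obtain ⟨d, rfl⟩ := Nat.exists_eq_add_of_lt hpq
    have h2 : 2*s*(q+d+1) = 2*s*q + 2*s*d + 2*s := by ring
    have h3 : 0 ≤ 2*s*d := Nat.zero_le _
    omega

theorem stmt0 (s k x : ℕ) (hs : 0 < s) (hk : 0 < k) (hodd : Odd x) (hpos : 0 < x)
    (hx : 2 * s < x) (h : ∀ t, s ≤ t → t ≤ s + k → x - 2 * t ∈ Lset s k) :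
    x ∈ Lset s k := by
  obtain ⟨j, i, hji, his, hxe⟩ := h s le_rfl (Nat.le_add_right _ _)
  have hi1 : 1 ≤ i := by omega
  have hxeq : x = 2*i + 2*s*j + 2*s - 1 := by omega
  have hik : k + 1 ≤ i := by
    by_contra hc
    push_neg at hc
    obtain ⟨j', i', hj'1, hj'2, he⟩ := h (s + i) (by omega) (by omega)
    have hi'1 : 1 ≤ i' := by omega
    rcases Nat.eq_zero_or_pos j with rfl | hj
    · simp only [Nat.mul_zero] at hxeq
      omega
    · obtain ⟨j0, rfl⟩ : ∃ j0, j = j0 + 1 := ⟨j - 1, by omega⟩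
      have hexp : 2*s*(j0+1) = 2*s*j0 + 2*s := by ring
      have hv : x - 2*(s+i) = (2*s - 1) + 2*s*j0 := by omega
      have := uniq_aux s (2*s-1) (2*i'-1) j0 j' (by omega) (by omega) (by rw [← hv, he])
      omega
  obtain ⟨j', i', hj'1, hj'2, he⟩ := h (s+k) (by omega) le_rfl
  have hv : x - 2*(s+k) = (2*(i-k) - 1) + 2*s*j := by omega
  have hu := uniq_aux s (2*(i-k)-1) (2*i'-1) j j' (by omega) (by omega) (by rw [← hv, he])
  refine ⟨j+1, i, ?_, his, ?_⟩
  · have : (j+1)*k = j*k + k := by ring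
    have h2 : j'*k = j*k := by rw [hu.2]
    omega
  · have : 2*s*(j+1) = 2*s*j + 2*s := by ring
    omega
end

section
/- Let s, k be positive integers and define R(s,k) = ⋃_{j≥0} {2i−1+2sj : jk+⌈(s+k)/2⌉+1 ≤ i ≤ s}. If x is a positive odd integer with x > 2s and x − 2t ∈ R(s,k) for every t with s ≤ t ≤ s+k, then x ∈ R(s,k). -/
open Relation

theorem stmt1 (s k x : ℕ) (hs : 0 < s) (hk : 0 < k) (hodd : Odd x) (hpos : 0 < x)
    (hx : 2 * s < x) (h : ∀ t, s ≤ t → t ≤ s + k → x - 2 * t ∈ Rset s k) :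
    x ∈ Rset s k := by
  set c := (s + k + 1) / 2 with hc
  have hc1 : 1 ≤ c := by omega
  obtain ⟨j₀, i₀, h1, h2, h3⟩ := h s le_rfl (by omega)
  have e1 : 2 * s * j₀ = 2 * (s * j₀) := by ring
  have e2 : j₀ * k + c + 1 ≤ i₀ := h1
  rw [e1] at h3
  by_cases hcase : j₀ * k + k + c + 1 ≤ i₀
  · refine ⟨j₀ + 1, i₀, ?_, h2, ?_⟩
    · have : (j₀ + 1) * k = j₀ * k + k := by ring
      omega
    · have e3 : 2 * s * (j₀ + 1) = 2 * (s * j₀) + 2 * s := by ring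
      rw [e3]
      have hi₀ : 1 ≤ i₀ := by
        have : 0 ≤ j₀ * k := Nat.zero_le _
        omega
      omega
  · set e := i₀ - (j₀ * k + c + 1) with he
    obtain ⟨j₁, i₁, g1, g2, g3⟩ := h (s + e + 1) (by omega) (by omega)
    exfalso
    have e4 : 2 * s * j₁ = 2 * (s * j₁) := by ring
    rw [e4] at g3
    have hj₁ : j₁ < j₀ := by
      by_contra hcon
      push_neg at hcon
      have h4 : j₀ * k ≤ j₁ * k := Nat.mul_le_mul_right k hcon
      have h5 : s * j₀ ≤ s * j₁ := Nat.mul_le_mul_left s hcon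
      omega
    have h6 : s * (j₁ + 1) ≤ s * j₀ := Nat.mul_le_mul_left s hj₁
    have h7 : s * (j₁ + 1) = s * j₁ + s := by ring
    omega
end

section
/- For positive integers s, k, if x = 2i−1+2sj ∈ L(s,k) with j ≥ 1, then x − 2t ∈ L(s,k) for all s ≤ t ≤ s+k. -/
open Relation

theorem stmt2 (s k : ℕ) (hs : 0 < s) (hk : 0 < k) (j i : ℕ) (hj : 1 ≤ j)
    (hi1 : j * k + 1 ≤ i) (hi2 : i ≤ s / 2) :
    ∀ t, s ≤ t → t ≤ s + k → (2 * i - 1 + 2 * s * j) - 2 * t ∈ Lset s k := by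
  obtain ⟨j', rfl⟩ : ∃ j', j = j' + 1 := ⟨j - 1, by omega⟩
  intro t hts htk
  obtain ⟨u, rfl⟩ : ∃ u, t = s + u := ⟨t - s, by omega⟩
  have huk : u ≤ k := by omega
  have hm : (j' + 1) * k = j' * k + k := by ring
  have hm2 : 2 * s * (j' + 1) = 2 * s * j' + 2 * s := by ring
  refine ⟨j', i - u, ?_, ?_, ?_⟩
  · have := hi1; omega
  · omega
  · have h1 : j' * k + k + 1 ≤ i := by omega
    omega
end

section
/- The sets L(s,k) and R(s,k) are disjoint for all positive integers s and k. -/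
open Relation

theorem stmt3 (s k : ℕ) (hs : 0 < s) (hk : 0 < k) :
    Disjoint (Lset s k) (Rset s k) := by
  rw [Set.disjoint_left]
  rintro x ⟨j, i, h1, h2, rfl⟩ ⟨j', i', h1', h2', hx⟩
  have hi : 1 ≤ i := by omega
  have hi' : 1 ≤ i' := by omega
  have e1 : 2 * s * j = 2 * (s * j) := by ring
  have e2 : 2 * s * j' = 2 * (s * j') := by ring
  rw [e1, e2] at hx
  have hmid : s / 2 < i' := by omega
  rcases Nat.lt_trichotomy j j' with h | h | h
  · have h3 : s * (j + 1) ≤ s * j' := Nat.mul_le_mul_left s h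
    have h4 : s * (j + 1) = s * j + s := by ring
    omega
  · subst h
    omega
  · have h3 : s * (j' + 1) ≤ s * j := Nat.mul_le_mul_left s h
    have h4 : s * (j' + 1) = s * j' + s := by ring
    omega
end

section
/- Every element of P(s,k) = L(s,k) ∪ R(s,k) is an odd positive integer, and if x ∈ P(s,k) with x > 2s+2k, then x − 2s − 2t ∈ P(s,k) for every t with 0 ≤ t ≤ k. -/
open Relation

theorem stmt4 (s k : ℕ) (hs : 0 < s) (hk : 0 < k) :
    (∀ x ∈ Pset s k, Odd x ∧ 0 < x) ∧
    (∀ x ∈ Pset s k, 2 * s + 2 * k < x →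
      ∀ t ≤ k, x - (2 * s + 2 * t) ∈ Pset s k) := by
  constructor
  · rintro x (⟨j, i, h1, h2, rfl⟩ | ⟨j, i, h1, h2, rfl⟩) <;>
    · have e : 2 * s * j = 2 * (s * j) := by ring
      exact ⟨⟨i - 1 + s * j, by omega⟩, by omega⟩
  · rintro x (⟨j, i, h1, h2, rfl⟩ | ⟨j, i, h1, h2, rfl⟩) hx t ht
    · rcases j with _ | j
      · exfalso
        have e : 2 * s * 0 = 0 := by ring
        omega
      · left
        refine ⟨j, i - t, ?_, ?_, ?_⟩ <;>
        · have e1 : (j + 1) * k = j * k + k := by ring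
          have e2 : 2 * s * (j + 1) = 2 * (s * j) + 2 * s := by ring
          have e3 : 2 * s * j = 2 * (s * j) := by ring
          omega
    · rcases j with _ | j
      · exfalso
        have e : 2 * s * 0 = 0 := by ring
        omega
      · right
        refine ⟨j, i - t, ?_, ?_, ?_⟩ <;>
        · have e1 : (j + 1) * k = j * k + k := by ring
          have e2 : 2 * s * (j + 1) = 2 * (s * j) + 2 * s := by ring
          have e3 : 2 * s * j = 2 * (s * j) := by ring
          omega
end

section
/- Let λ be a self-conjugate partition and t a positive integer. Then λ is a t-core if and only if the set MD(λ) of main-diagonal hook lengths satisfies: (i) MD(λ) is a set of distinct odd integers; (ii) if h ∈ MD(λ) and h > 2t, then h − 2t ∈ MD(λ); (iii) no two elements h₁, h₂ ∈ MD(λ) have h₁ + h₂ divisible by 2t. -/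
open Relation

namespace SC5aux

/-- beta numbers -/
def bfun (f : ℕ → ℕ) (i : ℕ) : ℤ := (f i : ℤ) - i - 1

def Sset (f : ℕ → ℕ) : Set ℤ := Set.range (bfun f)

lemma mem_Sset {f : ℕ → ℕ} {z : ℤ} : z ∈ Sset f ↔ ∃ i : ℕ, (f i : ℤ) - i - 1 = z := by
  simp [Sset, bfun]

lemma conj_finite {f : ℕ → ℕ} (hf : IsPartitionFun f) (j : ℕ) :
    {i | j < f i}.Finite := by
  obtain ⟨hA, N, hN⟩ := hf
  apply (Set.finite_Iio N).subset
  intro x hx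
  by_contra hxN
  have h1 : N ≤ x := not_lt.mp hxN
  have h2 : f x ≤ f N := hA h1
  simp only [Set.mem_setOf_eq] at hx
  omega

lemma conj_lt_iff {f : ℕ → ℕ} (hf : IsPartitionFun f) (i j : ℕ) :
    j < f i ↔ i < conj f j := by
  have hA := hf.1
  have hfin := conj_finite hf j
  constructor
  · intro h
    have hsub : Set.Iic i ⊆ {i' | j < f i'} := fun x hx =>
      lt_of_lt_of_le h (hA hx)
    have hle := Set.ncard_le_ncard hsub hfin
    have : (Set.Iic i).ncard = i + 1 := by
      rw [← Finset.coe_Iic, Set.ncard_coe_finset]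
      simp
    unfold conj
    omega
  · intro h
    by_contra hc
    have hc' : f i ≤ j := not_lt.mp hc
    have hsub : {i' | j < f i'} ⊆ Set.Iio i := by
      intro x hx
      by_contra hxi
      have : f x ≤ f i := hA (not_lt.mp hxi)
      simp only [Set.mem_setOf_eq] at hx
      omega
    have hle := Set.ncard_le_ncard hsub (Set.finite_Iio i)
    have : (Set.Iio i).ncard = i := by
      rw [← Finset.coe_Iio, Set.ncard_coe_finset]
      simp
    unfold conj at h
    omega

/-- duality: z ∈ S(f) iff -1-z ∉ S(conj f) -/
lemma mem_S_iff_conj {f : ℕ → ℕ} (hf : IsPartitionFun f) (z : ℤ) :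
    z ∈ Sset f ↔ (-1 - z) ∉ Sset (conj f) := by
  constructor
  · rintro hz hc
    rw [mem_Sset] at hz hc
    obtain ⟨i, hi⟩ := hz
    obtain ⟨j, hj⟩ := hc
    have hg := conj_lt_iff hf i j
    by_cases h : j < f i
    · have h2 : i < conj f j := hg.mp h
      omega
    · have h2 : ¬ i < conj f j := fun hh => h (hg.mpr hh)
      omega
  · intro hns
    by_contra hz
    apply hns
    rw [mem_Sset]
    obtain ⟨hA, N, hN⟩ := hf
    by_cases hcase : (f 0 : ℤ) ≤ z
    · refine ⟨z.toNat, ?_⟩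
      have hz0 : 0 ≤ z := le_trans (by positivity) hcase
      have hjz : (z.toNat : ℤ) = z := Int.toNat_of_nonneg hz0
      have hconj : conj f z.toNat = 0 := by
        unfold conj
        have : {i | z.toNat < f i} = ∅ := by
          ext i
          simp only [Set.mem_setOf_eq, Set.mem_empty_iff_false, iff_false, not_lt]
          have : f i ≤ f 0 := hA (Nat.zero_le i)
          omega
        rw [this, Set.ncard_empty]
      rw [hconj]
      omega
    · -- z < f 0, and z ∉ S f
      push_neg at hcase
      have hne : ∃ i, bfun f i < z := by
        refine ⟨N + ((f 0 : ℤ) - z).toNat, ?_⟩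
        have hfle : f (N + ((f 0 : ℤ) - z).toNat) ≤ f N := hA (Nat.le_add_right _ _)
        have h2 : (((f 0 : ℤ) - z).toNat : ℤ) ≥ (f 0 : ℤ) - z := Int.self_le_toNat _
        unfold bfun
        push_cast
        omega
      classical
      let i₀ := Nat.find hne
      have h1 : bfun f i₀ < z := Nat.find_spec hne
      have hi0 : i₀ ≠ 0 := by
        intro h0
        have : bfun f 0 < z := h0 ▸ h1
        unfold bfun at this
        omega
      have h2 : ¬ bfun f (i₀ - 1) < z := Nat.find_min hne (by omega)
      have h3 : bfun f (i₀ - 1) ≠ z := by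
        intro he
        exact hz (mem_Sset.mpr ⟨i₀ - 1, by unfold bfun at he; omega⟩)
      have h2' : z < bfun f (i₀ - 1) := by
        rcases lt_or_eq_of_le (not_lt.mp h2) with h | h
        · exact h
        · exact absurd h.symm h3
      -- set j = z + i₀
      unfold bfun at h1 h2'
      have hj0 : 0 ≤ z + (i₀ : ℤ) := by
        have : (0:ℤ) ≤ f i₀ := by positivity
        omega
      refine ⟨(z + i₀).toNat, ?_⟩
      have hjz : ((z + (i₀ : ℤ)).toNat : ℤ) = z + i₀ := Int.toNat_of_nonneg hj0
      set j := (z + (i₀ : ℤ)).toNat with hjdef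
      have hge : i₀ ≤ conj f j := by
        have hk : i₀ - 1 < conj f j := by
          rw [← conj_lt_iff ⟨hA, N, hN⟩]
          have : (i₀ : ℤ) - 1 = ((i₀ - 1 : ℕ) : ℤ) := by omega
          omega
        omega
      have hle2 : conj f j ≤ i₀ := by
        by_contra hgt
        have : j < f i₀ := (conj_lt_iff ⟨hA, N, hN⟩ i₀ j).mpr (by omega)
        omega
      have : conj f j = i₀ := le_antisymm hle2 hge
      omega

lemma hook_eq {f : ℕ → ℕ} (hf : IsPartitionFun f) (i j : ℕ) (h : j < f i) :
    (hook f i j : ℤ) = bfun f i - ((j : ℤ) - conj f j) := by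
  have h2 : i < conj f j := (conj_lt_iff hf i j).mp h
  unfold hook bfun
  omega

lemma cfun_not_mem {f : ℕ → ℕ} (hf : IsPartitionFun f) (j : ℕ) :
    ((j : ℤ) - conj f j) ∉ Sset f := by
  intro hc
  rw [mem_S_iff_conj hf] at hc
  exact hc (mem_Sset.mpr ⟨j, by omega⟩)

lemma compl_S {f : ℕ → ℕ} (hf : IsPartitionFun f) (w : ℤ) (hw : w ∉ Sset f) :
    ∃ j : ℕ, (j : ℤ) - conj f j = w := by
  have h2 : -1 - w ∈ Sset (conj f) := by
    by_contra hc
    exact hw ((mem_S_iff_conj hf w).mpr hc)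
  obtain ⟨j, hj⟩ := mem_Sset.mp h2
  exact ⟨j, by omega⟩

lemma cfun_lt_iff {f : ℕ → ℕ} (hf : IsPartitionFun f) (i j : ℕ) :
    ((j : ℤ) - conj f j) < bfun f i ↔ j < f i := by
  constructor
  · intro h
    by_contra hc
    have h2 : ¬ i < conj f j := fun hh => hc ((conj_lt_iff hf i j).mpr hh)
    unfold bfun at h
    omega
  · intro h
    have h2 : i < conj f j := (conj_lt_iff hf i j).mp h
    unfold bfun
    omega

lemma tcore_iff_S {f : ℕ → ℕ} (hf : IsPartitionFun f) {t : ℕ} (ht : 0 < t) :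
    IsTCore t f ↔ ∀ z ∈ Sset f, z - (t : ℤ) ∈ Sset f := by
  constructor
  · intro hc z hz
    by_contra hns
    obtain ⟨j, hj⟩ := compl_S hf _ hns
    obtain ⟨i, hi⟩ := hz
    have hbz : bfun f i = z := hi
    have hji : j < f i := (cfun_lt_iff hf i j).mp (by omega)
    apply hc i j hji
    have hh := hook_eq hf i j hji
    have hht : hook f i j = t := by omega
    rw [hht]
  · intro hcl i j hji hdvd
    have h1 := hook_eq hf i j hji
    have h2 : i < conj f j := (conj_lt_iff hf i j).mp hji
    have hpos : 0 < hook f i j := by unfold hook; omega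
    obtain ⟨m, hm⟩ := hdvd
    have key : ∀ n : ℕ, bfun f i - (t : ℤ) * n ∈ Sset f := by
      intro n
      induction n with
      | zero => simpa using ⟨i, rfl⟩
      | succ n ih =>
          have := hcl _ ih
          have he : bfun f i - (t : ℤ) * (n + 1 : ℕ) = (bfun f i - (t:ℤ) * n) - t := by
            push_cast; ring
          rw [he]
          exact this
    have hkm := key m
    have hcast : ((hook f i j : ℤ)) = (t : ℤ) * m := by exact_mod_cast hm
    have hje : (j : ℤ) - conj f j = bfun f i - (t : ℤ) * m := by
      rw [← hcast]; omega
    rw [← hje] at hkm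
    exact cfun_not_mem hf j hkm

lemma md_iff {f : ℕ → ℕ} (hsc : SelfConj f) (h : ℕ) :
    h ∈ MD f ↔ ∃ i, i < f i ∧ h = 2 * (f i - i) - 1 := by
  unfold MD
  simp only [Set.mem_setOf_eq]
  refine exists_congr fun i => and_congr_right fun hi => ?_
  have hx := hsc i
  unfold hook
  omega

lemma md_odd {f : ℕ → ℕ} (hsc : SelfConj f) : ∀ h ∈ MD f, Odd h := by
  intro h hh
  rw [md_iff hsc] at hh
  obtain ⟨i, hi, he⟩ := hh
  exact ⟨f i - i - 1, by omega⟩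

lemma bridge {f : ℕ → ℕ} (hsc : SelfConj f) (a : ℕ) :
    ((a : ℤ) ∈ Sset f ↔ 2 * a + 1 ∈ MD f) := by
  rw [mem_Sset, md_iff hsc]
  constructor
  · rintro ⟨i, hi⟩
    exact ⟨i, by omega, by omega⟩
  · rintro ⟨i, h1, h2⟩
    exact ⟨i, by omega⟩

lemma anti_S {f : ℕ → ℕ} (hf : IsPartitionFun f) (hsc : SelfConj f) (z : ℤ) :
    z ∈ Sset f ↔ -1 - z ∉ Sset f := by
  have hcf : conj f = f := funext fun j => (hsc j).symm
  rw [mem_S_iff_conj hf, hcf]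


lemma tcore_iff_md {f : ℕ → ℕ} (hf : IsPartitionFun f) (hsc : SelfConj f)
    {t : ℕ} (ht : 0 < t) :
    IsTCore t f ↔
      ((∀ h ∈ MD f, 2 * t < h → h - 2 * t ∈ MD f) ∧
       (∀ h ∈ MD f, h < 2 * t → (2 * t - h) ∉ MD f)) := by
  rw [tcore_iff_S hf ht]
  constructor
  · intro T
    constructor
    · intro h hh hlt
      obtain ⟨a, ha⟩ := md_odd hsc h hh
      rw [ha] at hh ⊢
      have hmem : (a : ℤ) ∈ Sset f := (bridge hsc a).mpr hh
      have hTm := T _ hmem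
      have hat : t ≤ a := by omega
      have hcast : ((a - t : ℕ) : ℤ) = (a : ℤ) - t := by omega
      have hmem2 : ((a - t : ℕ) : ℤ) ∈ Sset f := by rw [hcast]; exact hTm
      have := (bridge hsc (a - t)).mp hmem2
      have heq : 2 * a + 1 - 2 * t = 2 * (a - t) + 1 := by omega
      rw [heq]
      exact this
    · intro h hh hlt hbad
      obtain ⟨a, ha⟩ := md_odd hsc h hh
      rw [ha] at hh hlt hbad
      have hmem : (a : ℤ) ∈ Sset f := (bridge hsc a).mpr hh
      have hTm := T _ hmem
      have hat : a < t := by omega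
      -- z - t ∈ S with z - t < 0 ⇒ (t - a - 1 : ℕ) ∉ S
      have hanti := (anti_S hf hsc ((a : ℤ) - t)).mp hTm
      have hcast : ((t - a - 1 : ℕ) : ℤ) = -1 - ((a : ℤ) - t) := by omega
      have hnm : ((t - a - 1 : ℕ) : ℤ) ∉ Sset f := by rw [hcast]; exact hanti
      have hnmd : 2 * (t - a - 1) + 1 ∉ MD f := fun hc => hnm ((bridge hsc _).mpr hc)
      have heq : 2 * t - (2 * a + 1) = 2 * (t - a - 1) + 1 := by omega
      rw [heq] at hbad
      exact hnmd hbad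
  · rintro ⟨C2, C3⟩ z hz
    rcases le_or_gt 0 z with hz0 | hz0
    · obtain ⟨a, rfl⟩ : ∃ a : ℕ, z = (a : ℤ) := ⟨z.toNat, (Int.toNat_of_nonneg hz0).symm⟩
      have hmd : 2 * a + 1 ∈ MD f := (bridge hsc a).mp hz
      rcases le_or_gt t a with hta | hta
      · have h1 : 2 * t < 2 * a + 1 := by omega
        have h2 := C2 _ hmd h1
        have heq : 2 * a + 1 - 2 * t = 2 * (a - t) + 1 := by omega
        rw [heq] at h2
        have := (bridge hsc (a - t)).mpr h2
        have hcast : ((a - t : ℕ) : ℤ) = (a : ℤ) - t := by omega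
        rwa [hcast] at this
      · have h1 : 2 * a + 1 < 2 * t := by omega
        have h2 := C3 _ hmd h1
        have heq : 2 * t - (2 * a + 1) = 2 * (t - a - 1) + 1 := by omega
        rw [heq] at h2
        have hnm : ((t - a - 1 : ℕ) : ℤ) ∉ Sset f := fun hc => h2 ((bridge hsc _).mp hc)
        rw [anti_S hf hsc]
        have hcast : -1 - ((a : ℤ) - t) = ((t - a - 1 : ℕ) : ℤ) := by omega
        rw [hcast]
        exact hnm
    · obtain ⟨a, ha⟩ : ∃ a : ℕ, -1 - z = (a : ℤ) :=
        ⟨(-1 - z).toNat, (Int.toNat_of_nonneg (by omega)).symm⟩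
      have hnm : ((a : ℤ)) ∉ Sset f := by
        rw [← ha]
        exact (anti_S hf hsc z).mp hz
      have hnmd : 2 * a + 1 ∉ MD f := fun hc => hnm ((bridge hsc _).mpr hc)
      rw [anti_S hf hsc]
      have hcast : -1 - (z - t) = ((a + t : ℕ) : ℤ) := by omega
      rw [hcast]
      intro hc
      have hmd2 : 2 * (a + t) + 1 ∈ MD f := (bridge hsc _).mp hc
      have h1 : 2 * t < 2 * (a + t) + 1 := by omega
      have h2 := C2 _ hmd2 h1
      have heq : 2 * (a + t) + 1 - 2 * t = 2 * a + 1 := by omega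
      rw [heq] at h2
      exact hnmd h2

lemma c3_iff {f : ℕ → ℕ} (hsc : SelfConj f) {t : ℕ} (ht : 0 < t)
    (C2 : ∀ h ∈ MD f, 2 * t < h → h - 2 * t ∈ MD f) :
    (∀ h ∈ MD f, h < 2 * t → (2 * t - h) ∉ MD f) ↔
      (∀ h₁ ∈ MD f, ∀ h₂ ∈ MD f, ¬ (2 * t ∣ h₁ + h₂)) := by
  constructor
  · intro C3
    have key : ∀ n : ℕ, ∀ h₁ ∈ MD f, ∀ h₂ ∈ MD f, h₁ + h₂ ≤ n → ¬ (2 * t ∣ h₁ + h₂) := by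
      intro n
      induction n with
      | zero =>
          intro h₁ hm₁ h₂ hm₂ hle
          obtain ⟨a₁, e₁⟩ := md_odd hsc h₁ hm₁
          omega
      | succ n ih =>
          intro h₁ hm₁ h₂ hm₂ hle hdvd
          obtain ⟨a₁, e₁⟩ := md_odd hsc h₁ hm₁
          obtain ⟨a₂, e₂⟩ := md_odd hsc h₂ hm₂
          obtain ⟨m, hm⟩ := hdvd
          rcases m with _ | m
          · omega
          · by_cases hb1 : 2 * t < h₁
            · have hmem := C2 _ hm₁ hb1
              have hdvd2 : 2 * t ∣ (h₁ - 2 * t) + h₂ := by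
                refine ⟨m, ?_⟩
                have hmm : 2 * t * (m + 1) = 2 * t * m + 2 * t := by ring
                rw [hmm] at hm
                omega
              exact ih _ hmem _ hm₂ (by omega) hdvd2
            · by_cases hb2 : 2 * t < h₂
              · have hmem := C2 _ hm₂ hb2
                have hdvd2 : 2 * t ∣ h₁ + (h₂ - 2 * t) := by
                  refine ⟨m, ?_⟩
                  have hmm : 2 * t * (m + 1) = 2 * t * m + 2 * t := by ring
                  rw [hmm] at hm
                  omega
                exact ih _ hm₁ _ hmem (by omega) hdvd2
              · -- h₁ ≤ 2t, h₂ ≤ 2t, both odd so < 2t; sum = 2t(m+1) ≤ 4t - 2 ⇒ m = 0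
                rcases m with _ | m
                · have hsum : h₁ + h₂ = 2 * t := by omega
                  have hlt : h₁ < 2 * t := by omega
                  have := C3 _ hm₁ hlt
                  have he : 2 * t - h₁ = h₂ := by omega
                  rw [he] at this
                  exact this hm₂
                · have hmm : 2 * t * (m + 1 + 1) = 2 * t * m + 4 * t := by ring
                  rw [hmm] at hm
                  omega
    intro h₁ hm₁ h₂ hm₂
    exact key (h₁ + h₂) h₁ hm₁ h₂ hm₂ le_rfl
  · intro C3 h hm hlt hbad
    exact C3 _ hm _ hbad ⟨1, by omega⟩

end SC5aux

theorem stmt5 (t : ℕ) (ht : 0 < t) (f : ℕ → ℕ) (hf : IsPartitionFun f)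
    (hsc : SelfConj f) :
    IsTCore t f ↔
      ((∀ h ∈ MD f, Odd h) ∧
       (∀ h ∈ MD f, 2 * t < h → h - 2 * t ∈ MD f) ∧
       (∀ h₁ ∈ MD f, ∀ h₂ ∈ MD f, ¬ (2 * t ∣ h₁ + h₂))) := by
  rw [SC5aux.tcore_iff_md hf hsc ht]
  constructor
  · rintro ⟨C2, C3'⟩
    exact ⟨SC5aux.md_odd hsc, C2, (SC5aux.c3_iff hsc ht C2).mp C3'⟩
  · rintro ⟨_, C2, C3⟩
    exact ⟨C2, (SC5aux.c3_iff hsc ht C2).mpr C3⟩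
end

section
/- Let λ be a self-conjugate partition and let s, k be positive integers. Then λ is an (s, s+1, …, s+k)-core partition if and only if MD(λ) is an order ideal of the poset P(s,k) that contains no two elements h₁, h₂ with h₁ + h₂ ∈ {2s, 2s+2, …, 2s+2k}. -/
open Relation

/-! ### Auxiliary machinery -/

/-- The Maya diagram (beta-set) of `f`, as a subset of `ℤ`. -/
def Bset (f : ℕ → ℕ) : Set ℤ := {x | ∃ i : ℕ, x = (f i : ℤ) - i - 1}

section Aux

variable {f : ℕ → ℕ}

private lemma lt_f_iff (hf : IsPartitionFun f) (hsc : SelfConj f) (i j : ℕ) :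
    j < f i ↔ i < f j := by
  obtain ⟨N, hN⟩ := hf.2
  have key : ∀ a b : ℕ, b < f a → a < f b := by
    intro a b h
    have hfin : {i' | b < f i'}.Finite := by
      apply (Set.finite_Iio N).subset
      intro x hx
      simp only [Set.mem_setOf_eq] at hx
      by_contra hxN
      simp only [Set.mem_Iio, not_lt] at hxN
      have : f x ≤ f N := hf.1 hxN
      omega
    have hsub : Set.Iic a ⊆ {i' | b < f i'} := by
      intro x hx
      exact lt_of_lt_of_le h (hf.1 hx)
    have h1 : (Set.Iic a).ncard ≤ {i' | b < f i'}.ncard :=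
      Set.ncard_le_ncard hsub hfin
    have h2 : (Set.Iic a).ncard = a + 1 := by
      rw [← Finset.coe_Iic, Set.ncard_coe_finset, Nat.card_Iic]
    have h3 := hsc b
    unfold conj at h3
    omega
  exact ⟨key i j, key j i⟩

private lemma not_both (hf : IsPartitionFun f) (hsc : SelfConj f) {x : ℤ}
    (h1 : x ∈ Bset f) (h2 : (-1 - x) ∈ Bset f) : False := by
  obtain ⟨i, hi⟩ := h1
  obtain ⟨j, hj⟩ := h2
  have E := lt_f_iff hf hsc i j
  omega

private lemma exists_min_lt (hf : IsPartitionFun f) (x : ℤ) :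
    ∃ i : ℕ, ((f i : ℤ) - i - 1 < x) ∧ ∀ i' < i, ¬((f i' : ℤ) - i' - 1 < x) := by
  classical
  obtain ⟨N, hN⟩ := hf.2
  have hex : ∃ i : ℕ, (f i : ℤ) - i - 1 < x := by
    refine ⟨N + x.natAbs + 1, ?_⟩
    have h0 : f (N + x.natAbs + 1) = 0 := by
      have := hf.1 (show N ≤ N + x.natAbs + 1 by omega)
      omega
    rw [h0]
    omega
  exact ⟨Nat.find hex, Nat.find_spec hex, fun i' hi' => Nat.find_min hex hi'⟩

private lemma mem_or (hf : IsPartitionFun f) (hsc : SelfConj f) (x : ℤ) :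
    x ∈ Bset f ∨ (-1 - x) ∈ Bset f := by
  by_contra hcon
  push_neg at hcon
  obtain ⟨hx, hy⟩ := hcon
  obtain ⟨i, hi, himin⟩ := exists_min_lt hf x
  obtain ⟨j, hj, hjmin⟩ := exists_min_lt hf (-1 - x)
  have hi1 : i = 0 ∨ (x + i + 1 ≤ (f (i-1) : ℤ)) := by
    rcases Nat.eq_zero_or_pos i with h | h
    · exact Or.inl h
    · right
      have h1 := himin (i-1) (by omega)
      have h2 : (f (i-1):ℤ) - ((i-1 : ℕ) : ℤ) - 1 ≠ x := fun he => hx ⟨i-1, he.symm⟩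
      omega
  have hj1 : j = 0 ∨ ((-1-x) + j + 1 ≤ (f (j-1) : ℤ)) := by
    rcases Nat.eq_zero_or_pos j with h | h
    · exact Or.inl h
    · right
      have h1 := hjmin (j-1) (by omega)
      have h2 : (f (j-1):ℤ) - ((j-1 : ℕ) : ℤ) - 1 ≠ -1 - x := fun he => hy ⟨j-1, he.symm⟩
      omega
  have E1 := lt_f_iff hf hsc (j-1) i
  have E2 := lt_f_iff hf hsc (i-1) j
  omega

private lemma mem_iff_not (hf : IsPartitionFun f) (hsc : SelfConj f) (x : ℤ) :
    x ∈ Bset f ↔ (-1 - x) ∉ Bset f :=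
  ⟨fun h1 h2 => not_both hf hsc h1 h2,
   fun h2 => (mem_or hf hsc x).resolve_right h2⟩

private lemma MD_iff (hsc : SelfConj f) {h : ℕ} :
    h ∈ MD f ↔ ∃ x : ℤ, x ∈ Bset f ∧ 0 ≤ x ∧ (h : ℤ) = 2 * x + 1 := by
  constructor
  · rintro ⟨i, hi, rfl⟩
    refine ⟨(f i : ℤ) - i - 1, ⟨i, rfl⟩, by omega, ?_⟩
    have hc : conj f i = f i := (hsc i).symm
    unfold hook
    rw [hc]
    omega
  · rintro ⟨x, ⟨i, rfl⟩, h0, hx⟩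
    refine ⟨i, by omega, ?_⟩
    have hc : conj f i = f i := (hsc i).symm
    unfold hook
    rw [hc]
    omega

end Aux
section Core

variable {f : ℕ → ℕ}

private lemma core_iff_closed (hf : IsPartitionFun f) (hsc : SelfConj f)
    {t : ℕ} (ht : 0 < t) :
    IsTCore t f ↔ ∀ x ∈ Bset f, x - (t : ℤ) ∈ Bset f := by
  constructor
  · intro hcore x hx
    by_contra hc
    obtain ⟨i, hi⟩ := hx
    rcases Nat.eq_zero_or_pos (f i) with hfi | hfi
    · have hz : f (i + t) = 0 := by
        have := hf.1 (Nat.le_add_right i t)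
        omega
      exact hc ⟨i + t, by rw [hz]; push_cast; omega⟩
    · have h2 : (-1 - (x - t)) ∈ Bset f :=
        (mem_or hf hsc (x - t)).resolve_left hc
      obtain ⟨j, hj⟩ := h2
      have hjfi : j < f i := by
        have hE := lt_f_iff hf hsc i j
        omega
      have hE : i < f j := (lt_f_iff hf hsc i j).mp hjfi
      have hhook : hook f i j = t := by
        unfold hook
        rw [← hsc j]
        omega
      exact hcore i j hjfi (hhook ▸ dvd_refl t)
  · intro hcl i j hij hdvd
    have hE : i < f j := (lt_f_iff hf hsc i j).mp hij
    have hk : (hook f i j : ℤ) = ((f i : ℤ) - i - 1) - ((j : ℤ) - f j) := by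
      unfold hook
      rw [← hsc j]
      omega
    have hpos : 0 < hook f i j := by
      unfold hook
      rw [← hsc j]
      omega
    obtain ⟨m, hm⟩ := hdvd
    have hm1 : 0 < m := by
      rcases Nat.eq_zero_or_pos m with h | h
      · subst h; simp at hm; omega
      · exact h
    have hiter : ∀ n : ℕ, ((f i : ℤ) - i - 1) - (t : ℤ) * n ∈ Bset f := by
      intro n
      induction n with
      | zero => exact ⟨i, by push_cast; ring⟩
      | succ n ih =>
        have h2 := hcl _ ih
        convert h2 using 1
        push_cast
        ring
    have hc : ((j : ℤ) - f j) ∉ Bset f := by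
      intro hmem
      exact not_both hf hsc hmem ⟨j, by ring⟩
    apply hc
    have e : ((j : ℤ) - f j) = ((f i : ℤ) - i - 1) - (t : ℤ) * m := by
      have : (hook f i j : ℤ) = (t : ℤ) * m := by exact_mod_cast hm
      omega
    rw [e]
    exact hiter m

private lemma closed_iff (hf : IsPartitionFun f) (hsc : SelfConj f)
    {t : ℕ} (ht : 0 < t) :
    (∀ x ∈ Bset f, x - (t : ℤ) ∈ Bset f) ↔
      ((∀ h ∈ MD f, 2 * t < h → h - 2 * t ∈ MD f) ∧
        ¬ ∃ h₁ ∈ MD f, ∃ h₂ ∈ MD f, h₁ + h₂ = 2 * t) := by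
  constructor
  · intro hcl
    constructor
    · intro h hm hlt
      obtain ⟨x, hx, h0, he⟩ := (MD_iff hsc).mp hm
      have hx' := hcl x hx
      refine (MD_iff hsc).mpr ⟨x - t, hx', by omega, by omega⟩
    · rintro ⟨h₁, hm₁, h₂, hm₂, hsum⟩
      obtain ⟨x₁, hx₁, h01, he1⟩ := (MD_iff hsc).mp hm₁
      obtain ⟨x₂, hx₂, h02, he2⟩ := (MD_iff hsc).mp hm₂
      have hx' := hcl x₁ hx₁
      have e : x₁ - (t : ℤ) = -1 - x₂ := by omega
      rw [e] at hx'
      exact not_both hf hsc hx₂ hx'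
  · rintro ⟨ha, hb⟩
    have key : ∀ y ∈ Bset f, (t : ℤ) ≤ y → y - t ∈ Bset f := by
      intro y hy hty
      have hm : (2 * y.toNat + 1) ∈ MD f :=
        (MD_iff hsc).mpr ⟨y, hy, by omega, by omega⟩
      have := ha _ hm (by omega)
      obtain ⟨x', hx', h0', he'⟩ := (MD_iff hsc).mp this
      have e : x' = y - t := by omega
      rwa [e] at hx'
    intro x hx
    rcases le_or_gt (t : ℤ) x with h | h
    · exact key x hx h
    rcases le_or_gt 0 x with h0 | h0
    · by_contra hc
      have h2 := (mem_or hf hsc (x - t)).resolve_left hc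
      have e : (-1 - (x - t)) = (t : ℤ) - 1 - x := by ring
      rw [e] at h2
      refine hb ⟨2 * x.toNat + 1, (MD_iff hsc).mpr ⟨x, hx, h0, by omega⟩,
        2 * ((t : ℤ) - 1 - x).toNat + 1,
        (MD_iff hsc).mpr ⟨(t : ℤ) - 1 - x, h2, by omega, by omega⟩, by omega⟩
    · by_contra hc
      have h2 := (mem_or hf hsc (x - t)).resolve_left hc
      have e : (-1 - (x - t)) = (-1 - x) + (t : ℤ) := by ring
      rw [e] at h2
      have := key _ h2 (by omega)
      have e2 : (-1 - x) + (t : ℤ) - t = -1 - x := by ring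
      rw [e2] at this
      exact not_both hf hsc hx this

end Core
section Poset

private lemma pred_mul {a : ℕ} (b : ℕ) (h : 1 ≤ a) : (a - 1) * b + b = a * b := by
  cases a with
  | zero => omega
  | succ n => simp [Nat.succ_sub_one, Nat.succ_mul]

private lemma Pset_pos {s k x : ℕ} (hx : x ∈ Pset s k) : 1 ≤ x := by
  rcases hx with ⟨j, i, h1, h2, h3⟩ | ⟨j, i, h1, h2, h3⟩ <;> omega

private lemma Pset_sub {s k t x : ℕ} (hk : 0 < k) (ht : t ≤ k)
    (hx : x ∈ Pset s k) (hlt : 2 * s + 2 * t < x) :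
    x - (2 * s + 2 * t) ∈ Pset s k := by
  rcases hx with ⟨j, i, h1, h2, h3⟩ | ⟨j, i, h1, h2, h3⟩
  · rcases Nat.eq_zero_or_pos j with hj | hj
    · subst hj; omega
    · have e1 := pred_mul k hj
      have e2 := pred_mul (2 * s) hj
      refine Or.inl ⟨j - 1, i - t, by omega, by omega, ?_⟩
      have e3 : 2 * s * (j - 1) = (j - 1) * (2 * s) := Nat.mul_comm _ _
      have e4 : 2 * s * j = j * (2 * s) := Nat.mul_comm _ _
      omega
  · rcases Nat.eq_zero_or_pos j with hj | hj
    · subst hj; omega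
    · have e1 := pred_mul k hj
      have e2 := pred_mul (2 * s) hj
      refine Or.inr ⟨j - 1, i - t, by omega, by omega, ?_⟩
      have e3 : 2 * s * (j - 1) = (j - 1) * (2 * s) := Nat.mul_comm _ _
      have e4 : 2 * s * j = j * (2 * s) := Nat.mul_comm _ _
      omega

end Poset

section Descent

variable {f : ℕ → ℕ} {s k : ℕ}

/-- Closure of MD under subtracting `2(s+t')`, `t' ≤ k`. -/
private def ACond (s k : ℕ) (f : ℕ → ℕ) : Prop :=
  ∀ t' ≤ k, ∀ h ∈ MD f, 2 * (s + t') < h → h - 2 * (s + t') ∈ MD f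

private lemma desc1 (ha : ACond s k f) {j r t' : ℕ} (ht' : t' ≤ k) (htr : t' ≤ r)
    (hm : 2 * s * (j + 1) + 2 * r + 1 ∈ MD f) :
    2 * s * j + 2 * (r - t') + 1 ∈ MD f := by
  have e0 : 2 * s * (j + 1) = 2 * s * j + 2 * s := by ring
  have h2 := ha t' ht' _ hm (by omega)
  have e : 2 * s * (j + 1) + 2 * r + 1 - 2 * (s + t') = 2 * s * j + 2 * (r - t') + 1 := by
    omega
  rwa [e] at h2

private lemma descN (ha : ACond s k f) :
    ∀ m j r T : ℕ, m ≤ j → T ≤ r → T ≤ m * k →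
      2 * s * j + 2 * r + 1 ∈ MD f → 2 * s * (j - m) + 2 * (r - T) + 1 ∈ MD f := by
  intro m
  induction m with
  | zero =>
    intro j r T _ _ hT hm
    have : T = 0 := by omega
    subst this
    simpa using hm
  | succ m ih =>
    intro j r T hmj hTr hTk hm
    set t' := min T k with ht'
    have hj1 : 1 ≤ j := by omega
    have step : 2 * s * (j - 1) + 2 * (r - t') + 1 ∈ MD f := by
      have e : 2 * s * j + 2 * r + 1 = 2 * s * ((j - 1) + 1) + 2 * r + 1 := by
        have : 2 * s * j = 2 * s * ((j-1) + 1) := by congr 1; omega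
        omega
      exact desc1 ha (by omega) (by omega) (e ▸ hm)
    have h2 := ih (j - 1) (r - t') (T - t') (by omega) (by omega)
      (by
        have hsm : (m + 1) * k = m * k + k := Nat.succ_mul m k
        omega)
      step
    have e1 : j - 1 - m = j - (m + 1) := by omega
    have e2 : r - t' - (T - t') = r - T := by omega
    rwa [e1, e2] at h2

end Descent
section Structural

variable {f : ℕ → ℕ} {s k : ℕ}

private lemma MD_sub_Pset (hs : 0 < s) (hk : 0 < k) (hsc : SelfConj f)
    (ha : ACond s k f)
    (hb : ¬ ∃ h₁ ∈ MD f, ∃ h₂ ∈ MD f, ∃ t ≤ k, h₁ + h₂ = 2 * s + 2 * t) :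
    MD f ⊆ Pset s k := by
  intro h hm
  have hodd : h % 2 = 1 ∧ 1 ≤ h := by
    obtain ⟨x, _, h0, he⟩ := (MD_iff hsc).mp hm
    omega
  obtain ⟨j, i, hi1, his, hdec⟩ :
      ∃ j i : ℕ, 1 ≤ i ∧ i ≤ s ∧ h = 2 * s * j + 2 * i - 1 := by
    have hd := Nat.div_add_mod h (2 * s)
    have hl : h % (2 * s) < 2 * s := Nat.mod_lt h (by omega)
    have hm2 : h % (2 * s) % 2 = h % 2 := Nat.mod_mod_of_dvd h ⟨s, rfl⟩
    exact ⟨h / (2 * s), (h % (2 * s) + 1) / 2, by omega, by omega, by omega⟩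
  have hm' : 2 * s * j + 2 * (i - 1) + 1 ∈ MD f := by
    have e : h = 2 * s * j + 2 * (i - 1) + 1 := by omega
    rwa [e] at hm
  rcases le_or_gt i (s / 2) with hcase | hcase
  · -- the L case
    have hL : j * k + 1 ≤ i := by
      by_contra hcon
      push_neg at hcon
      have hjk : i ≤ j * k := by omega
      have hj1 : 1 ≤ j := by
        rcases Nat.eq_zero_or_pos j with h0 | h0
        · subst h0; simp at hjk; omega
        · exact h0
      have ebr : (j - 1) * k + k = j * k := pred_mul k hj1
      set U : ℕ := 2 * i - 1 - k with hU
      set M₁ : ℕ := min (i - 1) ((j - 1) * k) with hM₁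
      set T : ℕ := min U M₁ with hT
      set T' : ℕ := U - T with hT'
      have hTle : T ≤ i - 1 ∧ T ≤ (j - 1) * k := by omega
      have hT'le : T' ≤ i - 1 ∧ T' ≤ j * k := by omega
      have hmem₁ := descN ha (j - 1) j (i - 1) T (by omega) hTle.1 hTle.2 hm'
      have hmem₂ := descN ha j j (i - 1) T' (by omega) hT'le.1 hT'le.2 hm'
      have eo : 2 * s * (j - (j - 1)) = 2 * s := by
        have e : j - (j - 1) = 1 := by omega
        rw [e]; ring
      have ez : 2 * s * (j - j) = 0 := by
        rw [Nat.sub_self]; ring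
      refine hb ⟨_, hmem₁, _, hmem₂, 2 * i - 1 - U, by omega, by omega⟩
    exact Or.inl ⟨j, i, hL, hcase, by omega⟩
  · -- the R case
    have hR : j * k + (s + k + 1) / 2 + 1 ≤ i := by
      by_contra hcon
      push_neg at hcon
      have hjk : i ≤ j * k + (s + k + 1) / 2 := by omega
      have h2i : s + 1 ≤ 2 * i := by omega
      set U : ℕ := 2 * i - 1 - (s + k) with hU
      set M : ℕ := min (i - 1) (j * k) with hM
      set T : ℕ := min U M with hT
      set T' : ℕ := U - T with hT'
      have hU2M : U ≤ 2 * M := by omega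
      have hTle : T ≤ i - 1 ∧ T ≤ j * k := by omega
      have hT'le : T' ≤ i - 1 ∧ T' ≤ j * k := by omega
      have hmem₁ := descN ha j j (i - 1) T (by omega) hTle.1 hTle.2 hm'
      have hmem₂ := descN ha j j (i - 1) T' (by omega) hT'le.1 hT'le.2 hm'
      have ez : 2 * s * (j - j) = 0 := by
        rw [Nat.sub_self]; ring
      refine hb ⟨_, hmem₁, _, hmem₂, 2 * i - 1 - s - U, by omega, by omega⟩
    exact Or.inr ⟨j, i, hR, his, by omega⟩

end Structural
theorem stmt6 (s k : ℕ) (hs : 0 < s) (hk : 0 < k) (f : ℕ → ℕ)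
    (hf : IsPartitionFun f) (hsc : SelfConj f) :
    (∀ t, s ≤ t → t ≤ s + k → IsTCore t f) ↔
      (MD f ⊆ Pset s k ∧
       (∀ y ∈ MD f, ∀ x, Ple s k x y → x ∈ MD f) ∧
       ¬ ∃ h₁ ∈ MD f, ∃ h₂ ∈ MD f, ∃ t ≤ k, h₁ + h₂ = 2 * s + 2 * t) := by
  have hcores_iff : (∀ t, s ≤ t → t ≤ s + k → IsTCore t f) ↔
      (ACond s k f ∧
        ¬ ∃ h₁ ∈ MD f, ∃ h₂ ∈ MD f, ∃ t ≤ k, h₁ + h₂ = 2 * s + 2 * t) := by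
    constructor
    · intro hcore
      have hab : ∀ t' ≤ k,
          (∀ h ∈ MD f, 2 * (s + t') < h → h - 2 * (s + t') ∈ MD f) ∧
            ¬ ∃ h₁ ∈ MD f, ∃ h₂ ∈ MD f, h₁ + h₂ = 2 * (s + t') := fun t' ht' =>
        (closed_iff hf hsc (by omega)).mp
          ((core_iff_closed hf hsc (by omega)).mp
            (hcore (s + t') (by omega) (by omega)))
      constructor
      · intro t' ht' h hm hlt
        exact (hab t' ht').1 h hm hlt
      · rintro ⟨h₁, m₁, h₂, m₂, t', ht', heq⟩
        exact (hab t' ht').2 ⟨h₁, m₁, h₂, m₂, by omega⟩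
    · rintro ⟨ha, hb⟩ t hst hts
      rw [core_iff_closed hf hsc (by omega), closed_iff hf hsc (by omega)]
      constructor
      · intro h hm hlt
        have h2 := ha (t - s) (by omega) h hm (by omega)
        have e : 2 * (s + (t - s)) = 2 * t := by omega
        rwa [e] at h2
      · rintro ⟨h₁, m₁, h₂, m₂, heq⟩
        exact hb ⟨h₁, m₁, h₂, m₂, t - s, by omega, by omega⟩
  rw [hcores_iff]
  constructor
  · rintro ⟨ha, hb⟩
    refine ⟨MD_sub_Pset hs hk hsc ha hb, ?_, hb⟩
    intro y hy x hle
    induction hle using Relation.ReflTransGen.head_induction_on with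
    | refl => exact hy
    | @head a c hcov hrest ih =>
      obtain ⟨hxP, hzP, t', ht', heq⟩ := hcov
      have hpos := Pset_pos hxP
      have h2 := ha t' ht' _ ih (by omega)
      have e : c - 2 * (s + t') = a := by omega
      rwa [e] at h2
  · rintro ⟨hsub, hideal, hb⟩
    refine ⟨?_, hb⟩
    intro t' ht' h hm hlt
    have hP := hsub hm
    have hP' := Pset_sub hk ht' hP (by omega)
    have hcov : Pcov s k (h - (2 * s + 2 * t')) h := ⟨hP', hP, t', ht', by omega⟩
    have h2 := hideal h hm _ (Relation.ReflTransGen.single hcov)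
    have e : h - (2 * s + 2 * t') = h - 2 * (s + t') := by omega
    rwa [e] at h2
end

section
/- The map χ defined by χ(2i−1+2sj) = (i − (k/2)j, j) for elements of L(s,k) and χ(2i−1+2sj) = (s+1−i+(k/2)(j+1), −j−1) for elements of R(s,k) is an isomorphism of posets from P(s,k) to P'(s,k). -/
open Relation

namespace Stmt7Aux

/-- The isomorphism. -/
noncomputable def chi (s k : ℕ) (x : ℕ) : ℚ × ℤ :=
  let m := x / 2
  let j := m / s
  let i := m % s + 1
  if i ≤ s / 2 then ((i : ℚ) - (k : ℚ) / 2 * (j : ℚ), (j : ℤ))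
  else ((s : ℚ) + 1 - (i : ℚ) + (k : ℚ) / 2 * ((j : ℚ) + 1), -(j : ℤ) - 1)

lemma decomp (s j i : ℕ) (hs : 0 < s) (hi1 : 1 ≤ i) (his : i ≤ s) :
    (2 * i - 1 + 2 * s * j) / 2 % s + 1 = i ∧ (2 * i - 1 + 2 * s * j) / 2 / s = j := by
  have h1 : 2 * i - 1 + 2 * s * j = 2 * ((i - 1) + s * j) + 1 := by
    have : 2 * i - 1 = 2 * (i - 1) + 1 := by omega
    rw [this]; ring
  have h2 : (2 * i - 1 + 2 * s * j) / 2 = (i - 1) + s * j := by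
    rw [h1]; omega
  have h3 : i - 1 < s := by omega
  constructor
  · rw [h2, Nat.add_mul_mod_self_left, Nat.mod_eq_of_lt h3]; omega
  · rw [h2, Nat.add_mul_div_left _ _ hs, Nat.div_eq_of_lt h3]; omega

lemma chiL (s k : ℕ) (hs : 0 < s) (j i : ℕ) (hi1 : 1 ≤ i) (hi2 : i ≤ s / 2) :
    chi s k (2 * i - 1 + 2 * s * j) = ((i : ℚ) - (k : ℚ) / 2 * (j : ℚ), (j : ℤ)) := by
  obtain ⟨d1, d2⟩ := decomp s j i hs hi1 (by omega)
  simp only [chi, d1, d2, if_pos hi2]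

lemma chiR (s k : ℕ) (hs : 0 < s) (hk : 0 < k) (j i : ℕ)
    (hi1 : (s + k + 1) / 2 + 1 ≤ i) (hi2 : i ≤ s) :
    chi s k (2 * i - 1 + 2 * s * j) =
      ((s : ℚ) + 1 - (i : ℚ) + (k : ℚ) / 2 * ((j : ℚ) + 1), -(j : ℤ) - 1) := by
  obtain ⟨d1, d2⟩ := decomp s j i hs (by omega) hi2
  have hnot : ¬ (i ≤ s / 2) := by omega
  simp only [chi, d1, d2, if_neg hnot]

end Stmt7Aux
namespace Stmt7Aux

lemma eqnLL (s k i j i' j' : ℕ) (hs : 0 < s) (hk : 0 < k)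
    (h1 : j * k + 1 ≤ i) (h2 : i ≤ s / 2) (h3 : j' * k + 1 ≤ i') (h4 : i' ≤ s / 2) :
    (∃ t ≤ k, 2 * i' - 1 + 2 * s * j' = 2 * i - 1 + 2 * s * j + 2 * s + 2 * t) ↔
      (j' = j + 1 ∧ i ≤ i' ∧ i' ≤ i + k) := by
  have hi1 : 1 ≤ i := by omega
  have hi'1 : 1 ≤ i' := by omega
  have h2' : 2 * i ≤ s := by omega
  have h4' : 2 * i' ≤ s := by omega
  constructor
  · rintro ⟨t, ht, heq⟩
    zify [show 1 ≤ 2 * i by omega, show 1 ≤ 2 * i' by omega] at heq; push_cast at heq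
    rcases Nat.lt_trichotomy j' (j + 1) with hc | hc | hc
    · exfalso
      have hq : (s : ℤ) * j' ≤ (s : ℤ) * j := by
        have := Nat.mul_le_mul_left s (show j' ≤ j by omega)
        exact_mod_cast this
      have c1 : (2 : ℤ) * i' ≤ s := by exact_mod_cast h4'
      have c2 : (1 : ℤ) ≤ i := by exact_mod_cast hi1
      have c3 : (0 : ℤ) ≤ t := by positivity
      have c4 : (0 : ℤ) < s := by exact_mod_cast hs
      linarith
    · subst hc
      push_cast at heq
      have key : (i' : ℤ) = i + t := by
        have expand : (2 : ℤ) * s * (j + 1) = 2 * s * j + 2 * s := by ring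
        linarith [heq, expand]
      refine ⟨rfl, ?_, ?_⟩
      · have : (i : ℤ) ≤ i' := by
          have c3 : (0 : ℤ) ≤ t := by positivity
          linarith
        exact_mod_cast this
      · have : (i' : ℤ) ≤ i + k := by
          have c3 : (t : ℤ) ≤ k := by exact_mod_cast ht
          linarith
        exact_mod_cast this
    · exfalso
      have hq : (s : ℤ) * j + 2 * s ≤ (s : ℤ) * j' := by
        have := Nat.mul_le_mul_left s (show j + 2 ≤ j' by omega)
        push_cast at this ⊢; linarith
      have hB : (2 : ℤ) * k + 1 ≤ i' := by
        have := Nat.mul_le_mul_right k (show 2 ≤ j' by omega)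
        have h3' : j' * k + 1 ≤ i' := h3
        have : 2 * k + 1 ≤ i' := by omega
        exact_mod_cast this
      have c1 : (2 : ℤ) * i ≤ s := by exact_mod_cast h2'
      have c2 : (2 : ℤ) * i' ≤ s := by exact_mod_cast h4'
      have c3 : (t : ℤ) ≤ k := by exact_mod_cast ht
      have c4 : (1 : ℤ) ≤ i := by exact_mod_cast hi1
      linarith
  · rintro ⟨rfl, hle, hub⟩
    refine ⟨i' - i, by omega, ?_⟩
    zify [show 1 ≤ 2 * i by omega, show 1 ≤ 2 * i' by omega, hle]
    ring

lemma eqnRR (s k i j i' j' : ℕ) (hs : 0 < s) (hk : 0 < k)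
    (h1 : j * k + (s + k + 1) / 2 + 1 ≤ i) (h2 : i ≤ s)
    (h3 : j' * k + (s + k + 1) / 2 + 1 ≤ i') (h4 : i' ≤ s) :
    (∃ t ≤ k, 2 * i' - 1 + 2 * s * j' = 2 * i - 1 + 2 * s * j + 2 * s + 2 * t) ↔
      (j' = j + 1 ∧ i ≤ i' ∧ i' ≤ i + k) := by
  have hi1 : 1 ≤ i := by omega
  have hi'1 : 1 ≤ i' := by omega
  constructor
  · rintro ⟨t, ht, heq⟩
    zify [show 1 ≤ 2 * i by omega, show 1 ≤ 2 * i' by omega] at heq; push_cast at heq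
    rcases Nat.lt_trichotomy j' (j + 1) with hc | hc | hc
    · exfalso
      have hq : (s : ℤ) * j' ≤ (s : ℤ) * j := by
        have := Nat.mul_le_mul_left s (show j' ≤ j by omega)
        exact_mod_cast this
      have c1 : (i' : ℤ) ≤ s := by exact_mod_cast h4
      have c2 : (1 : ℤ) ≤ i := by exact_mod_cast hi1
      have c3 : (0 : ℤ) ≤ t := by positivity
      have c4 : (0 : ℤ) < s := by exact_mod_cast hs
      linarith
    · subst hc
      push_cast at heq
      have key : (i' : ℤ) = i + t := by
        have expand : (2 : ℤ) * s * (j + 1) = 2 * s * j + 2 * s := by ring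
        linarith [heq, expand]
      refine ⟨rfl, ?_, ?_⟩
      · have : (i : ℤ) ≤ i' := by
          have c3 : (0 : ℤ) ≤ t := by positivity
          linarith
        exact_mod_cast this
      · have : (i' : ℤ) ≤ i + k := by
          have c3 : (t : ℤ) ≤ k := by exact_mod_cast ht
          linarith
        exact_mod_cast this
    · exfalso
      have hq : (s : ℤ) * j + 2 * s ≤ (s : ℤ) * j' := by
        have := Nat.mul_le_mul_left s (show j + 2 ≤ j' by omega)
        push_cast at this ⊢; linarith
      have hB : (2 : ℤ) * k + 1 ≤ i' := by
        have := Nat.mul_le_mul_right k (show 2 ≤ j' by omega)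
        have : 2 * k + 1 ≤ i' := by omega
        exact_mod_cast this
      have c1 : (i : ℤ) ≤ s := by exact_mod_cast h2
      have c3 : (t : ℤ) ≤ k := by exact_mod_cast ht
      linarith
  · rintro ⟨rfl, hle, hub⟩
    refine ⟨i' - i, by omega, ?_⟩
    zify [show 1 ≤ 2 * i by omega, show 1 ≤ 2 * i' by omega, hle]
    ring

lemma eqnLR (s k i j i' j' : ℕ) (hs : 0 < s) (hk : 0 < k)
    (h1 : j * k + 1 ≤ i) (h2 : i ≤ s / 2)
    (h3 : j' * k + (s + k + 1) / 2 + 1 ≤ i') (h4 : i' ≤ s) :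
    ¬ ∃ t ≤ k, 2 * i' - 1 + 2 * s * j' = 2 * i - 1 + 2 * s * j + 2 * s + 2 * t := by
  have hi1 : 1 ≤ i := by omega
  have hi'1 : 1 ≤ i' := by omega
  have h2' : 2 * i ≤ s := by omega
  have hH : s + k ≤ 2 * ((s + k + 1) / 2) := by omega
  rintro ⟨t, ht, heq⟩
  zify [show 1 ≤ 2 * i by omega, show 1 ≤ 2 * i' by omega] at heq; push_cast at heq
  have c1 : (2 : ℤ) * i ≤ s := by exact_mod_cast h2'
  have c2 : (i' : ℤ) ≤ s := by exact_mod_cast h4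
  have c3 : (t : ℤ) ≤ k := by exact_mod_cast ht
  have c4 : (0 : ℤ) ≤ t := by positivity
  have c5 : (0 : ℤ) < s := by exact_mod_cast hs
  have c6 : (0 : ℤ) < k := by exact_mod_cast hk
  have c7 : (1 : ℤ) ≤ i := by exact_mod_cast hi1
  rcases Nat.lt_trichotomy j' (j + 1) with hc | hc | hc
  · have hq : (s : ℤ) * j' ≤ (s : ℤ) * j := by
      have := Nat.mul_le_mul_left s (show j' ≤ j by omega)
      exact_mod_cast this
    linarith
  · subst hc
    push_cast at heq
    have hB : 2 * i' ≥ 2 * k + (s + k) + 2 := by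
      have hjk : k ≤ (j + 1) * k := Nat.le_mul_of_pos_left k (by omega)
      omega
    have hB' : (2 : ℤ) * i' ≥ 2 * k + (s + k) + 2 := by exact_mod_cast hB
    have expand : (2 : ℤ) * s * (j + 1) = 2 * s * j + 2 * s := by ring
    linarith
  · have hq : (s : ℤ) * j + 2 * s ≤ (s : ℤ) * j' := by
      have := Nat.mul_le_mul_left s (show j + 2 ≤ j' by omega)
      push_cast at this ⊢; linarith
    have hB : (2 : ℤ) * k + 1 ≤ i' := by
      have := Nat.mul_le_mul_right k (show 2 ≤ j' by omega)
      have : 2 * k + 1 ≤ i' := by omega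
      exact_mod_cast this
    linarith

lemma eqnRL (s k i j i' j' : ℕ) (hs : 0 < s) (hk : 0 < k)
    (h1 : j * k + (s + k + 1) / 2 + 1 ≤ i) (h2 : i ≤ s)
    (h3 : j' * k + 1 ≤ i') (h4 : i' ≤ s / 2) :
    ¬ ∃ t ≤ k, 2 * i' - 1 + 2 * s * j' = 2 * i - 1 + 2 * s * j + 2 * s + 2 * t := by
  have hi1 : 1 ≤ i := by omega
  have hi'1 : 1 ≤ i' := by omega
  have h4' : 2 * i' ≤ s := by omega
  have hH : s + k + 2 ≤ 2 * i := by omega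
  rintro ⟨t, ht, heq⟩
  zify [show 1 ≤ 2 * i by omega, show 1 ≤ 2 * i' by omega] at heq; push_cast at heq
  have c1 : (2 : ℤ) * i' ≤ s := by exact_mod_cast h4'
  have c2 : (s : ℤ) + k + 2 ≤ 2 * i := by exact_mod_cast hH
  have c3 : (t : ℤ) ≤ k := by exact_mod_cast ht
  have c4 : (0 : ℤ) ≤ t := by positivity
  have c5 : (0 : ℤ) < s := by exact_mod_cast hs
  have c6 : (0 : ℤ) < k := by exact_mod_cast hk
  have c7 : (i : ℤ) ≤ s := by exact_mod_cast h2
  rcases Nat.lt_trichotomy j' (j + 2) with hc | hc | hc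
  · have hq : (s : ℤ) * j' ≤ (s : ℤ) * j + s := by
      have := Nat.mul_le_mul_left s (show j' ≤ j + 1 by omega)
      push_cast at this ⊢; linarith
    linarith
  · subst hc
    push_cast at heq
    have hB : (2 : ℤ) * k + 1 ≤ i' := by
      have := Nat.mul_le_mul_right k (show 2 ≤ j + 2 by omega)
      have : 2 * k + 1 ≤ i' := by omega
      exact_mod_cast this
    have hq : (s : ℤ) * (j + 2) = (s : ℤ) * j + 2 * s := by ring
    linarith
  · have hq : (s : ℤ) * j + 2 * s ≤ (s : ℤ) * j' := by
      have := Nat.mul_le_mul_left s (show j + 2 ≤ j' by omega)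
      push_cast at this ⊢; linarith
    have hB : (2 : ℤ) * k + 1 ≤ i' := by
      have := Nat.mul_le_mul_right k (show 2 ≤ j' by omega)
      have : 2 * k + 1 ≤ i' := by omega
      exact_mod_cast this
    linarith

end Stmt7Aux
namespace Stmt7Aux

lemma sndL' {s k : ℕ} {p : ℚ × ℤ} (h : p ∈ L'set s k) : 0 ≤ p.2 := by
  obtain ⟨j, i, -, -, rfl⟩ := h
  exact Int.natCast_nonneg j

lemma sndR' {s k : ℕ} {p : ℚ × ℤ} (h : p ∈ R'set s k) : p.2 < 0 := by
  obtain ⟨j, i, -, -, rfl⟩ := h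
  simp only
  omega

lemma memL' {s k : ℕ} {j i : ℕ} (h1 : j * k + 1 ≤ i) (h2 : i ≤ s / 2) :
    ((i : ℚ) - (k : ℚ) / 2 * (j : ℚ), (j : ℤ)) ∈ L'set s k := ⟨j, i, h1, h2, rfl⟩

lemma memR' {s k : ℕ} {j i : ℕ} (h1 : j * k + (s + k + 1) / 2 + 1 ≤ i) (h2 : i ≤ s) :
    ((s : ℚ) + 1 - (i : ℚ) + (k : ℚ) / 2 * ((j : ℚ) + 1), -(j : ℤ) - 1) ∈ R'set s k :=
  ⟨j, i, h1, h2, rfl⟩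

lemma p'covLL (s k i j i' j' : ℕ)
    (h1 : j * k + 1 ≤ i) (h2 : i ≤ s / 2) (h3 : j' * k + 1 ≤ i') (h4 : i' ≤ s / 2) :
    P'cov s k ((i : ℚ) - (k : ℚ) / 2 * (j : ℚ), (j : ℤ))
      ((i' : ℚ) - (k : ℚ) / 2 * (j' : ℚ), (j' : ℤ)) ↔
      (j' = j + 1 ∧ i ≤ i' ∧ i' ≤ i + k) := by
  constructor
  · rintro (⟨-, -, habs, hsnd⟩ | ⟨hp, -, -, -⟩)
    · simp only at habs hsnd
      have hj : j' = j + 1 := by exact_mod_cast hsnd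
      subst hj
      rw [abs_le] at habs
      push_cast at habs
      obtain ⟨ha, hb⟩ := habs
      have hk1 : (i : ℚ) ≤ i' := by linarith
      have hk2 : (i' : ℚ) ≤ i + k := by push_cast; linarith
      exact ⟨rfl, by exact_mod_cast hk1, by exact_mod_cast hk2⟩
    · have := sndR' hp
      simp only at this
      omega
  · rintro ⟨rfl, hle, hub⟩
    left
    refine ⟨memL' h1 h2, memL' h3 h4, ?_, by simp only; push_cast; ring⟩
    simp only
    rw [abs_le]
    have hle' : (i : ℚ) ≤ i' := by exact_mod_cast hle
    have hub' : (i' : ℚ) ≤ i + k := by exact_mod_cast hub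
    constructor <;> push_cast <;> push_cast at hub' <;> linarith

lemma p'covRR (s k i j i' j' : ℕ)
    (h1 : j * k + (s + k + 1) / 2 + 1 ≤ i) (h2 : i ≤ s)
    (h3 : j' * k + (s + k + 1) / 2 + 1 ≤ i') (h4 : i' ≤ s) :
    P'cov s k ((s : ℚ) + 1 - (i : ℚ) + (k : ℚ) / 2 * ((j : ℚ) + 1), -(j : ℤ) - 1)
      ((s : ℚ) + 1 - (i' : ℚ) + (k : ℚ) / 2 * ((j' : ℚ) + 1), -(j' : ℤ) - 1) ↔
      (j' = j + 1 ∧ i ≤ i' ∧ i' ≤ i + k) := by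
  constructor
  · rintro (⟨hp, -, -, -⟩ | ⟨-, -, habs, hsnd⟩)
    · have := sndL' hp
      simp only at this
      omega
    · simp only at habs hsnd
      have hj : j' = j + 1 := by omega
      subst hj
      rw [abs_le] at habs
      push_cast at habs
      obtain ⟨ha, hb⟩ := habs
      have hk1 : (i : ℚ) ≤ i' := by linarith
      have hk2 : (i' : ℚ) ≤ i + k := by push_cast; linarith
      exact ⟨rfl, by exact_mod_cast hk1, by exact_mod_cast hk2⟩
  · rintro ⟨rfl, hle, hub⟩
    right
    refine ⟨memR' h1 h2, memR' h3 h4, ?_, by simp only; push_cast; ring⟩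
    simp only
    rw [abs_le]
    have hle' : (i : ℚ) ≤ i' := by exact_mod_cast hle
    have hub' : (i' : ℚ) ≤ i + k := by exact_mod_cast hub
    constructor <;> push_cast <;> push_cast at hub' <;> linarith

lemma p'cov_mem {s k : ℕ} {p q : ℚ × ℤ} (h : P'cov s k p q) :
    p ∈ P'set s k ∧ q ∈ P'set s k := by
  rcases h with ⟨hp, hq, -, -⟩ | ⟨hp, hq, -, -⟩
  · exact ⟨Or.inl hp, Or.inl hq⟩
  · exact ⟨Or.inr hp, Or.inr hq⟩

end Stmt7Aux
namespace Stmt7Aux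

lemma cov_iff (s k : ℕ) (hs : 0 < s) (hk : 0 < k) {x y : ℕ}
    (hx : x ∈ Pset s k) (hy : y ∈ Pset s k) :
    Pcov s k x y ↔ P'cov s k (chi s k x) (chi s k y) := by
  rcases hx with ⟨j, i, h1, h2, rfl⟩ | ⟨j, i, h1, h2, rfl⟩ <;>
    rcases hy with ⟨j', i', h3, h4, rfl⟩ | ⟨j', i', h3, h4, rfl⟩
  · rw [chiL s k hs j i (by omega) h2, chiL s k hs j' i' (by omega) h4,
      p'covLL s k i j i' j' h1 h2 h3 h4, ← eqnLL s k i j i' j' hs hk h1 h2 h3 h4]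
    constructor
    · rintro ⟨-, -, h⟩; exact h
    · intro h
      exact ⟨Or.inl ⟨j, i, h1, h2, rfl⟩, Or.inl ⟨j', i', h3, h4, rfl⟩, h⟩
  · rw [chiL s k hs j i (by omega) h2, chiR s k hs hk j' i' (by omega) h4]
    constructor
    · rintro ⟨-, -, h⟩
      exact absurd h (eqnLR s k i j i' j' hs hk h1 h2 h3 h4)
    · rintro (⟨-, hq, -, -⟩ | ⟨hp, -, -, -⟩)
      · have := sndL' hq; simp only at this; omega
      · have := sndR' hp; simp only at this; omega
  · rw [chiR s k hs hk j i (by omega) h2, chiL s k hs j' i' (by omega) h4]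
    constructor
    · rintro ⟨-, -, h⟩
      exact absurd h (eqnRL s k i j i' j' hs hk h1 h2 h3 h4)
    · rintro (⟨hp, -, -, -⟩ | ⟨-, hq, -, -⟩)
      · have := sndL' hp; simp only at this; omega
      · have := sndR' hq; simp only at this; omega
  · rw [chiR s k hs hk j i (by omega) h2, chiR s k hs hk j' i' (by omega) h4,
      p'covRR s k i j i' j' h1 h2 h3 h4, ← eqnRR s k i j i' j' hs hk h1 h2 h3 h4]
    constructor
    · rintro ⟨-, -, h⟩; exact h
    · intro h
      exact ⟨Or.inr ⟨j, i, h1, h2, rfl⟩, Or.inr ⟨j', i', h3, h4, rfl⟩, h⟩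

lemma chi_mapsTo (s k : ℕ) (hs : 0 < s) (hk : 0 < k) :
    Set.MapsTo (chi s k) (Pset s k) (P'set s k) := by
  rintro x (⟨j, i, h1, h2, rfl⟩ | ⟨j, i, h1, h2, rfl⟩)
  · rw [chiL s k hs j i (by omega) h2]
    exact Or.inl (memL' h1 h2)
  · rw [chiR s k hs hk j i (by omega) h2]
    exact Or.inr (memR' h1 h2)

lemma chi_surjOn (s k : ℕ) (hs : 0 < s) (hk : 0 < k) :
    Set.SurjOn (chi s k) (Pset s k) (P'set s k) := by
  rintro p (⟨j, i, h1, h2, rfl⟩ | ⟨j, i, h1, h2, rfl⟩)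
  · exact ⟨2 * i - 1 + 2 * s * j, Or.inl ⟨j, i, h1, h2, rfl⟩,
      chiL s k hs j i (by omega) h2⟩
  · exact ⟨2 * i - 1 + 2 * s * j, Or.inr ⟨j, i, h1, h2, rfl⟩,
      chiR s k hs hk j i (by omega) h2⟩

lemma chi_injOn (s k : ℕ) (hs : 0 < s) (hk : 0 < k) :
    Set.InjOn (chi s k) (Pset s k) := by
  rintro x (⟨j, i, h1, h2, rfl⟩ | ⟨j, i, h1, h2, rfl⟩)
      y (⟨j', i', h3, h4, rfl⟩ | ⟨j', i', h3, h4, rfl⟩) hxy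
  · rw [chiL s k hs j i (by omega) h2, chiL s k hs j' i' (by omega) h4,
      Prod.mk.injEq] at hxy
    obtain ⟨e1, e2⟩ := hxy
    have hj : j = j' := by exact_mod_cast e2
    subst hj
    have hi : (i : ℚ) = i' := by linarith
    have hi' : i = i' := by exact_mod_cast hi
    rw [hi']
  · rw [chiL s k hs j i (by omega) h2, chiR s k hs hk j' i' (by omega) h4,
      Prod.mk.injEq] at hxy
    exact absurd hxy.2 (by omega)
  · rw [chiR s k hs hk j i (by omega) h2, chiL s k hs j' i' (by omega) h4,
      Prod.mk.injEq] at hxy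
    exact absurd hxy.2 (by omega)
  · rw [chiR s k hs hk j i (by omega) h2, chiR s k hs hk j' i' (by omega) h4,
      Prod.mk.injEq] at hxy
    obtain ⟨e1, e2⟩ := hxy
    have hj : j = j' := by omega
    subst hj
    have hi : (i : ℚ) = i' := by linarith
    have hi' : i = i' := by exact_mod_cast hi
    rw [hi']

lemma ple_to (s k : ℕ) (hs : 0 < s) (hk : 0 < k) {x y : ℕ} (h : Ple s k x y) :
    P'le s k (chi s k x) (chi s k y) := by
  induction h with
  | refl => exact Relation.ReflTransGen.refl
  | tail h1 h2 ih =>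
      exact ih.tail ((cov_iff s k hs hk h2.1 h2.2.1).mp h2)

lemma p'le_to (s k : ℕ) (hs : 0 < s) (hk : 0 < k) {p q : ℚ × ℤ} (h : P'le s k p q) :
    ∀ x ∈ Pset s k, ∀ y ∈ Pset s k, chi s k x = p → chi s k y = q → Ple s k x y := by
  induction h with
  | refl =>
      intro x hx y hy hxp hyq
      have hxy : x = y := chi_injOn s k hs hk hx hy (hxp.trans hyq.symm)
      subst hxy
      exact Relation.ReflTransGen.refl
  | tail h1 h2 ih =>
      intro x hx y hy hxp hyq
      obtain ⟨b', hb', hchib⟩ := chi_surjOn s k hs hk (p'cov_mem h2).1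
      refine (ih x hx b' hb' hxp hchib).tail ?_
      exact (cov_iff s k hs hk hb' hy).mpr (by rw [hchib, hyq]; exact h2)

end Stmt7Aux
theorem stmt7 (s k : ℕ) (hs : 0 < s) (hk : 0 < k) :
    ∃ χ : ℕ → ℚ × ℤ,
      (∀ j i : ℕ, j * k + 1 ≤ i → i ≤ s / 2 →
        χ (2 * i - 1 + 2 * s * j) = ((i : ℚ) - (k : ℚ) / 2 * (j : ℚ), (j : ℤ))) ∧
      (∀ j i : ℕ, j * k + (s + k + 1) / 2 + 1 ≤ i → i ≤ s →
        χ (2 * i - 1 + 2 * s * j) =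
          ((s : ℚ) + 1 - (i : ℚ) + (k : ℚ) / 2 * ((j : ℚ) + 1), -(j : ℤ) - 1)) ∧
      Set.BijOn χ (Pset s k) (P'set s k) ∧
      (∀ x ∈ Pset s k, ∀ y ∈ Pset s k, (Ple s k x y ↔ P'le s k (χ x) (χ y))) := by
  refine ⟨Stmt7Aux.chi s k, ?_, ?_, ?_, ?_⟩
  · intro j i h1 h2
    exact Stmt7Aux.chiL s k hs j i (by omega) h2
  · intro j i h1 h2
    exact Stmt7Aux.chiR s k hs hk j i (by omega) h2
  · exact ⟨Stmt7Aux.chi_mapsTo s k hs hk, Stmt7Aux.chi_injOn s k hs hk,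
      Stmt7Aux.chi_surjOn s k hs hk⟩
  · intro x hx y hy
    exact ⟨fun h => Stmt7Aux.ple_to s k hs hk h,
      fun h => Stmt7Aux.p'le_to s k hs hk h x hx y hy rfl rfl⟩
end

section
/- For all positive integers s and k, there is a bijection between the set of free ballot (s,k)-paths of height 0 and the set of ballot (s,k)-paths of even height. -/
open Relation

/-!
Reflecting the first `i` steps of a path (reversing them and swapping up and down steps) moves
its height after `t ≤ i` steps to `h(i - t) - h(i)` and lowers every later height by `2 h(i)`.
For a free path of height `0`, reflecting up to the last point where the minimal height `m ≤ 0`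
is reached yields a ballot path of height `-2m`. Conversely, a ballot path of height `2n` reaches
height `n` (its steps rise by at most one), stays above `n` after the last such point, and
reflecting up to that point yields a free path of height `0`. The two points correspond to each
other, so the two reflections are mutually inverse.
-/

theorem Int.exists_eq_of_le_add_one {f : ℕ → ℤ} (hf : ∀ t, f (t + 1) ≤ f t + 1) {m : ℤ}
    {a b : ℕ} (hab : a ≤ b) (ha : f a ≤ m) (hb : m ≤ f b) : ∃ t, a ≤ t ∧ t ≤ b ∧ f t = m := by
  induction b, hab using Nat.le_induction with
  | base => exact ⟨a, le_rfl, le_rfl, le_antisymm ha hb⟩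
  | succ b hab ih =>
    by_cases hmb : m ≤ f b
    · obtain ⟨t, hat, htb, hft⟩ := ih hmb
      exact ⟨t, hat, htb.trans b.le_succ, hft⟩
    · exact ⟨b + 1, hab.trans b.le_succ, le_rfl, by linarith [hf b]⟩

namespace BallotPath

section Reflection

variable {α : Type*}

def reflect (P : List (α × ℤ)) : List (α × ℤ) := P.reverse.map fun p => (p.1, -p.2)

def height (P : List (α × ℤ)) (t : ℕ) : ℤ := ((P.take t).map Prod.snd).sum

def reflectPrefix (P : List (α × ℤ)) (i : ℕ) : List (α × ℤ) :=
  reflect (P.take i) ++ P.drop i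

variable {P : List (α × ℤ)} {i t : ℕ}

@[simp] theorem length_reflect (P : List (α × ℤ)) : (reflect P).length = P.length := by
  simp [reflect]

@[simp] theorem reflect_reflect (P : List (α × ℤ)) : reflect (reflect P) = P := by
  simp [reflect, List.map_reverse, Function.comp_def]

theorem sum_snd_reflect (P : List (α × ℤ)) :
    ((reflect P).map Prod.snd).sum = -(P.map Prod.snd).sum := by
  simp [reflect, List.sum_neg, Function.comp_def]

theorem take_reflect (P : List (α × ℤ)) (t : ℕ) :
    (reflect P).take t = reflect (P.drop (P.length - t)) := by
  rw [reflect, reflect, ← List.map_take, List.take_reverse]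

@[simp] theorem height_zero (P : List (α × ℤ)) : height P 0 = 0 := rfl

theorem height_of_length_le (h : P.length ≤ t) : height P t = (P.map Prod.snd).sum := by
  rw [height, List.take_of_length_le h]

theorem height_take {u : ℕ} (h : u ≤ i) : height (P.take i) u = height P u := by
  rw [height, height, List.take_take, min_eq_left h]

theorem height_append_of_le_length {Q : List (α × ℤ)} (h : t ≤ P.length) :
    height (P ++ Q) t = height P t := by
  rw [height, height, List.take_append_of_le_length h]

theorem height_append_length_add (Q : List (α × ℤ)) (u : ℕ) :
    height (P ++ Q) (P.length + u) = (P.map Prod.snd).sum + height Q u := by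
  simp [height, List.take_append, List.take_of_length_le]

theorem sum_snd_drop (P : List (α × ℤ)) (i : ℕ) :
    ((P.drop i).map Prod.snd).sum = (P.map Prod.snd).sum - height P i := by
  rw [height, ← List.sum_take_add_sum_drop (P.map Prod.snd) i, List.map_take, List.map_drop]
  ring

theorem height_drop (i u : ℕ) : height (P.drop i) u = height P (i + u) - height P i := by
  have key := sum_snd_drop (P.take (i + u)) i
  rwa [List.drop_take, Nat.add_sub_cancel_left, height_take (Nat.le_add_right i u)] at key

theorem height_reflect (P : List (α × ℤ)) (t : ℕ) :
    height (reflect P) t = height P (P.length - t) - (P.map Prod.snd).sum := by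
  rw [height, take_reflect, sum_snd_reflect, sum_snd_drop]
  ring

theorem height_succ_le (hstep : ∀ p ∈ P, p.2 ≤ 1) (t : ℕ) :
    height P (t + 1) ≤ height P t + 1 := by
  rcases lt_or_ge t P.length with h | h
  · rw [height, height, List.take_add_one, List.getElem?_eq_getElem h]
    simp only [List.map_append, List.sum_append, Option.toList_some, List.map_cons, List.map_nil,
      List.sum_cons, List.sum_nil, add_zero]
    linarith [hstep _ (List.getElem_mem h)]
  · rw [height_of_length_le h, height_of_length_le (by omega)]
    omega

theorem length_reflectPrefix (P : List (α × ℤ)) (i : ℕ) :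
    (reflectPrefix P i).length = P.length := by
  simp [reflectPrefix]
  omega

theorem height_reflectPrefix_of_le (h : i ≤ P.length) (ht : t ≤ i) :
    height (reflectPrefix P i) t = height P (i - t) - height P i := by
  have hi : (P.take i).length = i := List.length_take_of_le h
  rw [reflectPrefix, height_append_of_le_length (by simpa [hi]), height_reflect, hi,
    height_take (Nat.sub_le i t), ← height_of_length_le hi.le, height_take le_rfl]

theorem height_reflectPrefix_add (h : i ≤ P.length) (u : ℕ) :
    height (reflectPrefix P i) (i + u) = height P (i + u) - 2 * height P i := by
  have hi : (reflect (P.take i)).length = i := by simpa using List.length_take_of_le h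
  have key := height_append_length_add (P := reflect (P.take i)) (P.drop i) u
  rw [hi, sum_snd_reflect] at key
  rw [reflectPrefix, key, ← height_of_length_le (List.length_take_of_le h).le, height_take le_rfl,
    height_drop]
  ring

theorem sum_snd_reflectPrefix (h : i ≤ P.length) :
    ((reflectPrefix P i).map Prod.snd).sum = (P.map Prod.snd).sum - 2 * height P i := by
  have key := height_reflectPrefix_add h (P.length - i)
  rwa [Nat.add_sub_cancel' h, height_of_length_le (le_refl P.length),
    height_of_length_le (P := reflectPrefix P i) (length_reflectPrefix P i).le] at key

theorem reflectPrefix_reflectPrefix (h : i ≤ P.length) :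
    reflectPrefix (reflectPrefix P i) i = P := by
  have hi : (reflect (P.take i)).length = i := by simpa using List.length_take_of_le h
  rw [reflectPrefix, reflectPrefix, List.take_left' hi, List.drop_left' hi, reflect_reflect,
    List.take_append_drop]

theorem sum_fst_reflectPrefix {β : Type*} [AddCommMonoid β] {P : List (β × ℤ)} :
    ((reflectPrefix P i).map Prod.fst).sum = (P.map Prod.fst).sum := by
  conv_rhs => rw [← List.take_append_drop i P]
  simp [reflectPrefix, reflect, Function.comp_def, List.sum_reverse]

theorem prefix_sum_nonneg_iff :
    (∀ Q, Q <+: P → 0 ≤ (Q.map Prod.snd).sum) ↔ ∀ t, 0 ≤ height P t := by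
  refine ⟨fun h t => h _ (List.take_prefix t P), fun h Q hQ => ?_⟩
  rw [List.prefix_iff_eq_take.1 hQ]
  exact h Q.length

end Reflection

section LastPoints

variable {α : Type*} {P : List (α × ℤ)} {i t : ℕ}

def lastArgmin (P : List (α × ℤ)) : ℕ :=
  Nat.findGreatest (fun t => ∀ u ≤ P.length, height P t ≤ height P u) P.length

def lastHalfway (P : List (α × ℤ)) : ℕ :=
  Nat.findGreatest (fun t => 2 * height P t = (P.map Prod.snd).sum) P.length

theorem lastArgmin_le_length (P : List (α × ℤ)) : lastArgmin P ≤ P.length :=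
  Nat.findGreatest_le _

theorem lastHalfway_le_length (P : List (α × ℤ)) : lastHalfway P ≤ P.length :=
  Nat.findGreatest_le _

theorem height_lastArgmin_le (P : List (α × ℤ)) (u : ℕ) :
    height P (lastArgmin P) ≤ height P u := by
  obtain ⟨i, hi, hmin⟩ := (Finset.range (P.length + 1)).exists_min_image (height P)
    ⟨0, Finset.mem_range.2 P.length.succ_pos⟩
  have hspec := Nat.findGreatest_spec (P := fun t => ∀ u ≤ P.length, height P t ≤ height P u)
    (Nat.lt_succ_iff.1 (Finset.mem_range.1 hi))
    (fun u hu => hmin u (Finset.mem_range.2 (Nat.lt_succ_of_le hu)))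
  rcases le_or_gt u P.length with hu | hu
  · exact hspec u hu
  · rw [height_of_length_le hu.le, ← height_of_length_le le_rfl]
    exact hspec _ le_rfl

theorem height_lastArgmin_lt (h : lastArgmin P < t) (ht : t ≤ P.length) :
    height P (lastArgmin P) < height P t := by
  have hnot := Nat.findGreatest_is_greatest h ht
  push Not at hnot
  obtain ⟨u, hu, hlt⟩ := hnot
  exact (height_lastArgmin_le P u).trans_lt hlt

theorem lastArgmin_eq (hi : i ≤ P.length) (hmin : ∀ u ≤ P.length, height P i ≤ height P u)
    (hlt : ∀ u, i < u → u ≤ P.length → height P i < height P u) : lastArgmin P = i :=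
  Nat.findGreatest_eq_iff.2 ⟨hi, fun _ => hmin, fun u hiu hu hmin' =>
    (hlt u hiu hu).not_ge (hmin' i hi)⟩

theorem lastHalfway_eq (hi : i ≤ P.length) (hhalf : 2 * height P i = (P.map Prod.snd).sum)
    (hne : ∀ u, i < u → u ≤ P.length → 2 * height P u ≠ (P.map Prod.snd).sum) :
    lastHalfway P = i :=
  Nat.findGreatest_eq_iff.2 ⟨hi, fun _ => hhalf, hne⟩

theorem height_lastHalfway {n : ℕ} (hstep : ∀ p ∈ P, p.2 ≤ 1)
    (htotal : (P.map Prod.snd).sum = 2 * n) : height P (lastHalfway P) = n := by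
  obtain ⟨t, -, ht, hnt⟩ := Int.exists_eq_of_le_add_one (height_succ_le hstep) (m := n)
    (Nat.zero_le P.length) (by simp) (by rw [height_of_length_le le_rfl, htotal]; omega)
  have hhalf := Nat.findGreatest_spec (P := fun t => 2 * height P t = (P.map Prod.snd).sum) ht
    (by rw [hnt, htotal])
  change 2 * height P (lastHalfway P) = _ at hhalf
  omega

theorem lt_height_of_lastHalfway_lt {n : ℕ} (hstep : ∀ p ∈ P, p.2 ≤ 1)
    (htotal : (P.map Prod.snd).sum = 2 * n) (h : lastHalfway P < t) (ht : t ≤ P.length) :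
    n < height P t := by
  have not_half {u : ℕ} (hu : lastHalfway P < u) (hu' : u ≤ P.length) : height P u ≠ n :=
    fun hun => Nat.findGreatest_is_greatest hu hu' (show 2 * height P u = _ by rw [hun, htotal])
  by_contra! hle
  obtain ⟨u, htu, hu, hun⟩ := Int.exists_eq_of_le_add_one (height_succ_le hstep) ht hle
    (by rw [height_of_length_le le_rfl, htotal]; omega)
  exact not_half (h.trans_le htu) hu hun

theorem lastHalfway_reflectPrefix_lastArgmin (hP : (P.map Prod.snd).sum = 0) :
    lastHalfway (reflectPrefix P (lastArgmin P)) = lastArgmin P := by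
  have hi := lastArgmin_le_length P
  have htotal := sum_snd_reflectPrefix hi
  refine lastHalfway_eq (by rwa [length_reflectPrefix]) ?_ fun u hiu hu => ?_
  · rw [htotal, height_reflectPrefix_of_le hi le_rfl, Nat.sub_self, height_zero, hP]
    ring
  · rw [length_reflectPrefix] at hu
    have hlt := height_lastArgmin_lt hiu hu
    obtain ⟨v, rfl⟩ := Nat.exists_eq_add_of_le hiu.le
    rw [height_reflectPrefix_add hi, htotal, hP]
    omega

theorem lastArgmin_reflectPrefix_lastHalfway {n : ℕ} (hstep : ∀ p ∈ P, p.2 ≤ 1)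
    (hnonneg : ∀ t, 0 ≤ height P t) (htotal : (P.map Prod.snd).sum = 2 * n) :
    lastArgmin (reflectPrefix P (lastHalfway P)) = lastHalfway P := by
  have hj := lastHalfway_le_length P
  have hhalf := height_lastHalfway hstep htotal
  set S := reflectPrefix P (lastHalfway P)
  have hSj : height S (lastHalfway P) = -n := by
    rw [height_reflectPrefix_of_le hj le_rfl, Nat.sub_self, height_zero, hhalf]
    ring
  have hlen : S.length = P.length := length_reflectPrefix P _
  have hlt (u : ℕ) (hju : lastHalfway P < u) (hu : u ≤ S.length) :
      height S (lastHalfway P) < height S u := by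
    rw [hlen] at hu
    obtain ⟨v, rfl⟩ := Nat.exists_eq_add_of_le hju.le
    have := lt_height_of_lastHalfway_lt hstep htotal hju hu
    rw [hSj, height_reflectPrefix_add hj, hhalf]
    omega
  refine lastArgmin_eq (hlen ▸ hj) (fun u hu => ?_) hlt
  rcases le_or_gt u (lastHalfway P) with hju | hju
  · rw [hSj, height_reflectPrefix_of_le hj hju, hhalf]
    linarith [hnonneg (lastHalfway P - u)]
  · exact (hlt u hju hu).le

end LastPoints

section Ballot

variable {k w : ℕ} {P : List (ℕ × ℤ)}

theorem _root_.ValidStep.snd_le_one {p : ℕ × ℤ} (h : ValidStep k p) : p.2 ≤ 1 := by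
  rcases h with ⟨_, h | h⟩ | ⟨h, _⟩ <;> omega

theorem _root_.ValidStep.neg_snd {p : ℕ × ℤ} (h : ValidStep k p) :
    ValidStep k (p.1, -p.2) := by
  rcases h with ⟨h1, h2 | h2⟩ | ⟨h1, h2⟩
  · exact Or.inl ⟨h1, Or.inr (by simp [h2])⟩
  · exact Or.inl ⟨h1, Or.inl (by simp [h2])⟩
  · exact Or.inr ⟨by simp [h1], h2⟩

theorem _root_.IsFreeBallot.reflectPrefix {n : ℤ} {i : ℕ} (hP : IsFreeBallot k w n P)
    (hi : i ≤ P.length) : IsFreeBallot k w (n - 2 * height P i) (reflectPrefix P i) := by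
  obtain ⟨hv, hw, hn⟩ := hP
  refine ⟨fun p hp => ?_, by rw [sum_fst_reflectPrefix, hw],
    by rw [sum_snd_reflectPrefix hi, hn]⟩
  rcases List.mem_append.1 hp with hp | hp
  · obtain ⟨q, hq, rfl⟩ := List.mem_map.1 hp
    exact (hv q (List.mem_of_mem_take (List.mem_reverse.1 hq))).neg_snd
  · exact hv p (List.mem_of_mem_drop hp)

theorem isBallot_reflectPrefix_lastArgmin (hP : IsFreeBallot k w 0 P) :
    ∃ n : ℕ, IsBallot k w (2 * n) (reflectPrefix P (lastArgmin P)) := by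
  have hi := lastArgmin_le_length P
  have hmin := height_lastArgmin_le P
  have hneg : height P (lastArgmin P) ≤ 0 := hmin 0
  refine ⟨(-height P (lastArgmin P)).toNat, ?_, prefix_sum_nonneg_iff.2 fun t => ?_⟩
  · convert hP.reflectPrefix hi using 1
    omega
  rcases le_or_gt t (lastArgmin P) with ht | ht
  · rw [height_reflectPrefix_of_le hi ht]
    linarith [hmin (lastArgmin P - t)]
  · obtain ⟨v, rfl⟩ := Nat.exists_eq_add_of_le ht.le
    rw [height_reflectPrefix_add hi]
    linarith [hmin (lastArgmin P + v)]

theorem isFreeBallot_reflectPrefix_lastHalfway {n : ℕ}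
    (hP : IsBallot k w (2 * n) P) : IsFreeBallot k w 0 (reflectPrefix P (lastHalfway P)) := by
  have hhalf := height_lastHalfway (fun p hp => (hP.1.1 p hp).snd_le_one) hP.1.2.2
  convert hP.1.reflectPrefix (lastHalfway_le_length P) using 1
  rw [hhalf]
  ring

end Ballot

def freeBallotEquivBallot (k w : ℕ) :
    {P : List (ℕ × ℤ) // IsFreeBallot k w 0 P} ≃
      {P : List (ℕ × ℤ) // ∃ n : ℕ, IsBallot k w (2 * n) P} where
  toFun P := ⟨reflectPrefix P.1 (lastArgmin P.1), isBallot_reflectPrefix_lastArgmin P.2⟩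
  invFun P := ⟨reflectPrefix P.1 (lastHalfway P.1),
    let ⟨_, hP⟩ := P.2; isFreeBallot_reflectPrefix_lastHalfway hP⟩
  left_inv P := Subtype.ext <| by
    dsimp only
    rw [lastHalfway_reflectPrefix_lastArgmin P.2.2.2,
      reflectPrefix_reflectPrefix (lastArgmin_le_length _)]
  right_inv P := Subtype.ext <| by
    obtain ⟨n, ⟨hv, -, htotal⟩, hnonneg⟩ := P.2
    dsimp only
    rw [lastArgmin_reflectPrefix_lastHalfway (fun p hp => (hv p hp).snd_le_one)
      (prefix_sum_nonneg_iff.1 hnonneg) htotal,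
      reflectPrefix_reflectPrefix (lastHalfway_le_length _)]

end BallotPath

theorem stmt10_general (s k : ℕ) :
    Nonempty ({P : List (ℕ × ℤ) // IsFreeBallot k (2 * s) 0 P} ≃
      {P : List (ℕ × ℤ) // ∃ n : ℕ, IsBallot k (2 * s) (2 * n) P}) :=
  ⟨BallotPath.freeBallotEquivBallot k (2 * s)⟩

theorem stmt10 (s k : ℕ) (hs : 0 < s) (hk : 0 < k) :
    Nonempty ({P : List (ℕ × ℤ) // IsFreeBallot k (2 * s) 0 P} ≃
      {P : List (ℕ × ℤ) // ∃ n : ℕ, IsBallot k (2 * s) (2 * n) P}) :=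
  stmt10_general s k
end

section
/- For all positive integers s and k, there is a bijection between the set of free ballot (s,k)-paths of height −1 and the set of ballot (s,k)-paths of odd height. -/
open Relation

namespace Stmt11

def F : ℤ → List (ℕ × ℤ) → List (ℕ × ℤ)
  | _, [] => []
  | d, p :: t => if p.2 = -1 ∧ d = 0 then (p.1, 1) :: F d t else p :: F (d + p.2) t

def Fst : ℤ → List (ℕ × ℤ) → ℤ
  | d, [] => d
  | d, p :: t => if p.2 = -1 ∧ d = 0 then Fst d t else Fst (d + p.2) t

def G : ℤ → List (ℕ × ℤ) → List (ℕ × ℤ)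
  | _, [] => []
  | d, p :: t => if p.2 = 1 ∧ d = 0 then (p.1, -1) :: G d t else p :: G (d - p.2) t

def Gst : ℤ → List (ℕ × ℤ) → ℤ
  | d, [] => d
  | d, p :: t => if p.2 = 1 ∧ d = 0 then Gst d t else Gst (d - p.2) t

lemma F_map_fst (l : List (ℕ × ℤ)) : ∀ d, (F d l).map Prod.fst = l.map Prod.fst := by
  induction l with
  | nil => intro d; rfl
  | cons p t ih =>
    intro d
    by_cases h : p.2 = -1 ∧ d = 0 <;> simp [F, h, ih]

lemma G_map_fst (l : List (ℕ × ℤ)) : ∀ d, (G d l).map Prod.fst = l.map Prod.fst := by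
  induction l with
  | nil => intro d; rfl
  | cons p t ih =>
    intro d
    by_cases h : p.2 = 1 ∧ d = 0 <;> simp [G, h, ih]

lemma valid_flip_up {k : ℕ} {p : ℕ × ℤ} (h : ValidStep k p) (h2 : p.2 = -1) :
    ValidStep k (p.1, 1) := by
  rcases h with ⟨h1, _⟩ | ⟨h0, _⟩
  · exact Or.inl ⟨h1, Or.inl rfl⟩
  · rw [h2] at h0; exact absurd h0 (by norm_num)

lemma valid_flip_down {k : ℕ} {p : ℕ × ℤ} (h : ValidStep k p) (h2 : p.2 = 1) :
    ValidStep k (p.1, -1) := by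
  rcases h with ⟨h1, _⟩ | ⟨h0, _⟩
  · exact Or.inl ⟨h1, Or.inr rfl⟩
  · rw [h2] at h0; exact absurd h0 (by norm_num)

lemma valid_snd {k : ℕ} {p : ℕ × ℤ} (h : ValidStep k p) : -1 ≤ p.2 ∧ p.2 ≤ 1 := by
  rcases h with ⟨_, h | h⟩ | ⟨h, _⟩ <;> omega

lemma F_valid {k : ℕ} (l : List (ℕ × ℤ)) :
    ∀ d, (∀ p ∈ l, ValidStep k p) → ∀ q ∈ F d l, ValidStep k q := by
  induction l with
  | nil => intro d _ q hq; simp [F] at hq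
  | cons p t ih =>
    intro d hl q hq
    by_cases h : p.2 = -1 ∧ d = 0
    · rw [F, if_pos h] at hq
      rcases List.mem_cons.mp hq with hq | hq
      · exact hq ▸ valid_flip_up (hl p (by simp)) h.1
      · exact ih d (fun r hr => hl r (by simp [hr])) q hq
    · rw [F, if_neg h] at hq
      rcases List.mem_cons.mp hq with hq | hq
      · exact hq ▸ hl p (by simp)
      · exact ih _ (fun r hr => hl r (by simp [hr])) q hq

lemma G_valid {k : ℕ} (l : List (ℕ × ℤ)) :
    ∀ d, (∀ p ∈ l, ValidStep k p) → ∀ q ∈ G d l, ValidStep k q := by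
  induction l with
  | nil => intro d _ q hq; simp [G] at hq
  | cons p t ih =>
    intro d hl q hq
    by_cases h : p.2 = 1 ∧ d = 0
    · rw [G, if_pos h] at hq
      rcases List.mem_cons.mp hq with hq | hq
      · exact hq ▸ valid_flip_down (hl p (by simp)) h.1
      · exact ih d (fun r hr => hl r (by simp [hr])) q hq
    · rw [G, if_neg h] at hq
      rcases List.mem_cons.mp hq with hq | hq
      · exact hq ▸ hl p (by simp)
      · exact ih _ (fun r hr => hl r (by simp [hr])) q hq

lemma Fst_nonneg (l : List (ℕ × ℤ)) :
    ∀ d, 0 ≤ d → (∀ p ∈ l, -1 ≤ p.2) → 0 ≤ Fst d l := by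
  induction l with
  | nil => intro d hd _; simpa [Fst] using hd
  | cons p t ih =>
    intro d hd hl
    by_cases h : p.2 = -1 ∧ d = 0
    · rw [Fst, if_pos h]
      exact ih d hd (fun r hr => hl r (by simp [hr]))
    · rw [Fst, if_neg h]
      have h1 : -1 ≤ p.2 := hl p (by simp)
      exact ih _ (by omega) (fun r hr => hl r (by simp [hr]))

lemma Gst_nonneg (l : List (ℕ × ℤ)) :
    ∀ d, 0 ≤ d → (∀ p ∈ l, p.2 ≤ 1) → 0 ≤ Gst d l := by
  induction l with
  | nil => intro d hd _; simpa [Gst] using hd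
  | cons p t ih =>
    intro d hd hl
    by_cases h : p.2 = 1 ∧ d = 0
    · rw [Gst, if_pos h]
      exact ih d hd (fun r hr => hl r (by simp [hr]))
    · rw [Gst, if_neg h]
      have h1 : p.2 ≤ 1 := hl p (by simp)
      exact ih _ (by omega) (fun r hr => hl r (by simp [hr]))

lemma Fst_ge (l : List (ℕ × ℤ)) : ∀ d, d + (l.map Prod.snd).sum ≤ Fst d l := by
  induction l with
  | nil => intro d; simp [Fst]
  | cons p t ih =>
    intro d
    by_cases h : p.2 = -1 ∧ d = 0
    · rw [Fst, if_pos h]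
      have := ih d
      simp only [List.map_cons, List.sum_cons, h.1]
      omega
    · rw [Fst, if_neg h]
      have := ih (d + p.2)
      simp only [List.map_cons, List.sum_cons]
      omega

lemma F_sum (l : List (ℕ × ℤ)) :
    ∀ d, ((F d l).map Prod.snd).sum = 2 * Fst d l - 2 * d - (l.map Prod.snd).sum := by
  induction l with
  | nil => intro d; simp [F, Fst]
  | cons p t ih =>
    intro d
    by_cases h : p.2 = -1 ∧ d = 0
    · rw [F, if_pos h, Fst, if_pos h]
      have := ih d
      simp only [List.map_cons, List.sum_cons, h.1] at *
      omega
    · rw [F, if_neg h, Fst, if_neg h]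
      have := ih (d + p.2)
      simp only [List.map_cons, List.sum_cons] at *
      omega

lemma G_sum (l : List (ℕ × ℤ)) :
    ∀ d, ((G d l).map Prod.snd).sum = 2 * (d - Gst d l) - (l.map Prod.snd).sum := by
  induction l with
  | nil => intro d; simp [G, Gst]
  | cons p t ih =>
    intro d
    by_cases h : p.2 = 1 ∧ d = 0
    · rw [G, if_pos h, Gst, if_pos h]
      have := ih d
      simp only [List.map_cons, List.sum_cons, h.1, h.2] at *
      omega
    · rw [G, if_neg h, Gst, if_neg h]
      have := ih (d - p.2)
      simp only [List.map_cons, List.sum_cons] at *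
      omega

lemma F_append (a b : List (ℕ × ℤ)) :
    ∀ d, F d (a ++ b) = F d a ++ F (Fst d a) b := by
  induction a with
  | nil => intro d; simp [F, Fst]
  | cons p t ih =>
    intro d
    by_cases h : p.2 = -1 ∧ d = 0 <;>
      simp [F, Fst, h, ih]

lemma G_append (a b : List (ℕ × ℤ)) :
    ∀ d, G d (a ++ b) = G d a ++ G (Gst d a) b := by
  induction a with
  | nil => intro d; simp [G, Gst]
  | cons p t ih =>
    intro d
    by_cases h : p.2 = 1 ∧ d = 0 <;>
      simp [G, Gst, h, ih]

lemma Fst_append (a b : List (ℕ × ℤ)) :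
    ∀ d, Fst d (a ++ b) = Fst (Fst d a) b := by
  induction a with
  | nil => intro d; simp [Fst]
  | cons p t ih =>
    intro d
    by_cases h : p.2 = -1 ∧ d = 0 <;>
      simp [Fst, h, ih]

lemma Gst_append (a b : List (ℕ × ℤ)) :
    ∀ d, Gst d (a ++ b) = Gst (Gst d a) b := by
  induction a with
  | nil => intro d; simp [Gst]
  | cons p t ih =>
    intro d
    by_cases h : p.2 = 1 ∧ d = 0 <;>
      simp [Gst, h, ih]

lemma F_length (l : List (ℕ × ℤ)) (d : ℤ) : (F d l).length = l.length := by
  have := congrArg List.length (F_map_fst l d)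
  simpa using this

lemma F_prefix {Q l : List (ℕ × ℤ)} {d : ℤ} (h : Q <+: F d l) :
    ∃ l', l' <+: l ∧ Q = F d l' := by
  refine ⟨l.take Q.length, List.take_prefix _ _, ?_⟩
  have hlen : Q.length ≤ l.length := by
    have := h.length_le
    rwa [F_length] at this
  have h2 : Q = (F d l).take Q.length := List.prefix_iff_eq_take.mp h
  have key : (F d l).take Q.length = F d (l.take Q.length) := by
    conv_lhs => rw [← List.take_append_drop Q.length l]
    rw [F_append]
    rw [List.take_append_of_le_length (by rw [F_length]; simpa using hlen)]
    rw [List.take_of_length_le (by rw [F_length]; simp)]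
  conv_lhs => rw [h2]
  rw [key]

lemma Gst_le (l : List (ℕ × ℤ)) (c : ℤ) :
    ∀ d, 0 ≤ d → d ≤ c + (l.map Prod.snd).sum →
      (∀ m₂, m₂ <:+ l → 0 ≤ c + (m₂.map Prod.snd).sum) →
      (∀ p ∈ l, p.2 ≤ 1) → Gst d l ≤ c := by
  induction l with
  | nil => intro d hd hdc _ _; simpa [Gst] using hdc
  | cons p t ih =>
    intro d hd hdc hsuf hl
    have hsuf' : ∀ m₂, m₂ <:+ t → 0 ≤ c + (m₂.map Prod.snd).sum :=
      fun m₂ hm₂ => hsuf m₂ (hm₂.trans (List.suffix_cons p t))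
    by_cases h : p.2 = 1 ∧ d = 0
    · rw [Gst, if_pos h]
      refine ih d hd ?_ hsuf' (fun r hr => hl r (by simp [hr]))
      have := hsuf t (List.suffix_cons p t)
      omega
    · rw [Gst, if_neg h]
      have h1 : p.2 ≤ 1 := hl p (by simp)
      refine ih _ (by omega) ?_ hsuf' (fun r hr => hl r (by simp [hr]))
      simp only [List.map_cons, List.sum_cons] at hdc
      omega

lemma GF (l : List (ℕ × ℤ)) :
    ∀ d, 0 ≤ d → (∀ p ∈ l, -1 ≤ p.2) →
      G (Fst d l) (F d l).reverse = l.reverse ∧ Gst (Fst d l) (F d l).reverse = d := by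
  induction l with
  | nil => intro d _ _; simp [F, Fst, G, Gst]
  | cons p t ih =>
    intro d hd hl
    have hl' : ∀ r ∈ t, -1 ≤ r.2 := fun r hr => hl r (by simp [hr])
    by_cases h : p.2 = -1 ∧ d = 0
    · rw [F, if_pos h, Fst, if_pos h]
      obtain ⟨ih1, ih2⟩ := ih d hd hl'
      rw [List.reverse_cons, List.reverse_cons]
      constructor
      · rw [G_append, ih1, ih2]
        congr 1
        rw [G, if_pos ⟨rfl, h.2⟩]
        simp [G, Prod.ext_iff, h.1]
      · rw [Gst_append, ih2, Gst, if_pos ⟨rfl, h.2⟩, Gst]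
    · rw [F, if_neg h, Fst, if_neg h]
      have h1 : -1 ≤ p.2 := hl p (by simp)
      have hd' : 0 ≤ d + p.2 := by omega
      obtain ⟨ih1, ih2⟩ := ih (d + p.2) hd' hl'
      rw [List.reverse_cons, List.reverse_cons]
      have hne : ¬(p.2 = 1 ∧ d + p.2 = 0) := by omega
      constructor
      · rw [G_append, ih1, ih2]
        congr 1
        rw [G, if_neg hne]
        simp [G]
      · rw [Gst_append, ih2, Gst, if_neg hne, Gst]
        ring

lemma FG (l : List (ℕ × ℤ)) :
    ∀ d, 0 ≤ d → (∀ p ∈ l, p.2 ≤ 1) →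
      F (Gst d l) (G d l).reverse = l.reverse ∧ Fst (Gst d l) (G d l).reverse = d := by
  induction l with
  | nil => intro d _ _; simp [F, Fst, G, Gst]
  | cons p t ih =>
    intro d hd hl
    have hl' : ∀ r ∈ t, r.2 ≤ 1 := fun r hr => hl r (by simp [hr])
    by_cases h : p.2 = 1 ∧ d = 0
    · rw [G, if_pos h, Gst, if_pos h]
      obtain ⟨ih1, ih2⟩ := ih d hd hl'
      rw [List.reverse_cons, List.reverse_cons]
      constructor
      · rw [F_append, ih1, ih2]
        congr 1
        rw [F, if_pos ⟨rfl, h.2⟩]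
        simp [F, Prod.ext_iff, h.1]
      · rw [Fst_append, ih2, Fst, if_pos ⟨rfl, h.2⟩, Fst]
    · rw [G, if_neg h, Gst, if_neg h]
      have h1 : p.2 ≤ 1 := hl p (by simp)
      have hd' : 0 ≤ d - p.2 := by omega
      obtain ⟨ih1, ih2⟩ := ih (d - p.2) hd' hl'
      rw [List.reverse_cons, List.reverse_cons]
      have hne : ¬(p.2 = -1 ∧ d - p.2 = 0) := by omega
      constructor
      · rw [F_append, ih1, ih2]
        congr 1
        rw [F, if_neg hne]
        simp [F]
      · rw [Fst_append, ih2, Fst, if_neg hne, Fst]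
        ring

end Stmt11

theorem stmt11 (s k : ℕ) (hs : 0 < s) (hk : 0 < k) :
    Nonempty ({P : List (ℕ × ℤ) // IsFreeBallot k (2 * s) (-1) P} ≃
      {P : List (ℕ × ℤ) // ∃ n : ℕ, IsBallot k (2 * s) (2 * n + 1) P}) := by
  constructor
  refine
    { toFun := fun P => ⟨Stmt11.F 0 P.1, ?_⟩
      invFun := fun Q =>
        ⟨(Stmt11.G (((Q.1.map Prod.snd).sum - 1) / 2) Q.1.reverse).reverse, ?_⟩
      left_inv := ?_
      right_inv := ?_ }
  · -- forward membership
    obtain ⟨hval, hw, hsum⟩ := P.2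
    have hb : ∀ p ∈ P.1, -1 ≤ p.2 := fun p hp => (Stmt11.valid_snd (hval p hp)).1
    have h0 : 0 ≤ Stmt11.Fst 0 P.1 := Stmt11.Fst_nonneg _ 0 le_rfl hb
    refine ⟨(Stmt11.Fst 0 P.1).toNat, ⟨Stmt11.F_valid _ 0 hval, ?_, ?_⟩, ?_⟩
    · rw [Stmt11.F_map_fst]; exact hw
    · rw [Stmt11.F_sum, hsum]; omega
    · intro Q hQ
      obtain ⟨l', hl', rfl⟩ := Stmt11.F_prefix hQ
      have h1 : 0 ≤ Stmt11.Fst 0 l' :=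
        Stmt11.Fst_nonneg _ 0 le_rfl (fun p hp => hb p (hl'.subset hp))
      have h2 := Stmt11.Fst_ge l' 0
      rw [Stmt11.F_sum]
      omega
  · -- backward membership
    obtain ⟨n, ⟨⟨hval, hw, hsum⟩, hpre⟩⟩ := Q.2
    have hd : ((Q.1.map Prod.snd).sum - 1) / 2 = (n : ℤ) := by rw [hsum]; omega
    rw [hd]
    have hval' : ∀ p ∈ Q.1.reverse, ValidStep k p :=
      fun p hp => hval p (List.mem_reverse.mp hp)
    have hb : ∀ p ∈ Q.1.reverse, p.2 ≤ 1 := fun p hp => (Stmt11.valid_snd (hval' p hp)).2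
    have hrevsum : (Q.1.reverse.map Prod.snd).sum = 2 * (n : ℤ) + 1 := by
      rw [List.map_reverse, List.sum_reverse, hsum]
    have hsuf : ∀ m₂, m₂ <:+ Q.1.reverse → 0 ≤ (0 : ℤ) + (m₂.map Prod.snd).sum := by
      intro m₂ hm₂
      obtain ⟨t, ht⟩ := hm₂
      have hp : m₂.reverse <+: Q.1 :=
        ⟨t.reverse, by rw [← List.reverse_append, ht, List.reverse_reverse]⟩
      have := hpre m₂.reverse hp
      rw [List.map_reverse, List.sum_reverse] at this
      omega
    have hgst : Stmt11.Gst (n : ℤ) Q.1.reverse = 0 := by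
      have h1 := Stmt11.Gst_nonneg Q.1.reverse (n : ℤ) (by positivity) hb
      have h2 := Stmt11.Gst_le Q.1.reverse 0 (n : ℤ) (by positivity)
        (by rw [hrevsum]; omega) hsuf hb
      omega
    refine ⟨?_, ?_, ?_⟩
    · intro p hp
      exact Stmt11.G_valid _ _ hval' p (List.mem_reverse.mp hp)
    · rw [List.map_reverse, List.sum_reverse, Stmt11.G_map_fst, List.map_reverse,
        List.sum_reverse]
      exact hw
    · rw [List.map_reverse, List.sum_reverse, Stmt11.G_sum, hgst, hrevsum]
      ring
  · -- left inverse
    rintro ⟨P, hP⟩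
    obtain ⟨hval, hw, hsum⟩ := hP
    apply Subtype.ext
    dsimp only
    have hb : ∀ p ∈ P, -1 ≤ p.2 := fun p hp => (Stmt11.valid_snd (hval p hp)).1
    have hFsum : ((Stmt11.F 0 P).map Prod.snd).sum = 2 * Stmt11.Fst 0 P + 1 := by
      rw [Stmt11.F_sum, hsum]; ring
    have hd : (((Stmt11.F 0 P).map Prod.snd).sum - 1) / 2 = Stmt11.Fst 0 P := by
      rw [hFsum]; omega
    rw [hd]
    obtain ⟨h1, -⟩ := Stmt11.GF P 0 le_rfl hb
    rw [h1, List.reverse_reverse]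
  · -- right inverse
    rintro ⟨Q, hQ⟩
    obtain ⟨n, ⟨⟨hval, hw, hsum⟩, hpre⟩⟩ := hQ
    apply Subtype.ext
    dsimp only
    have hd : ((Q.map Prod.snd).sum - 1) / 2 = (n : ℤ) := by rw [hsum]; omega
    rw [hd]
    have hval' : ∀ p ∈ Q.reverse, ValidStep k p :=
      fun p hp => hval p (List.mem_reverse.mp hp)
    have hb : ∀ p ∈ Q.reverse, p.2 ≤ 1 := fun p hp => (Stmt11.valid_snd (hval' p hp)).2
    have hrevsum : (Q.reverse.map Prod.snd).sum = 2 * (n : ℤ) + 1 := by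
      rw [List.map_reverse, List.sum_reverse, hsum]
    have hsuf : ∀ m₂, m₂ <:+ Q.reverse → 0 ≤ (0 : ℤ) + (m₂.map Prod.snd).sum := by
      intro m₂ hm₂
      obtain ⟨t, ht⟩ := hm₂
      have hp : m₂.reverse <+: Q :=
        ⟨t.reverse, by rw [← List.reverse_append, ht, List.reverse_reverse]⟩
      have := hpre m₂.reverse hp
      rw [List.map_reverse, List.sum_reverse] at this
      omega
    have hgst : Stmt11.Gst (n : ℤ) Q.reverse = 0 := by
      have h1 := Stmt11.Gst_nonneg Q.reverse (n : ℤ) (by positivity) hb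
      have h2 := Stmt11.Gst_le Q.reverse 0 (n : ℤ) (by positivity)
        (by rw [hrevsum]; omega) hsuf hb
      omega
    obtain ⟨h1, -⟩ := Stmt11.FG Q.reverse (n : ℤ) (by positivity) hb
    rw [hgst] at h1
    rw [h1, List.reverse_reverse]
end

section
/- For positive integers m and k, there is a bijection between the set of symmetric (2m, 2k)-Dyck paths and the set of symmetric (2m+1, 2k)-Dyck paths. -/
open Relation

namespace Stmt12Aux

/-- reverse complement -/
def rc (P : List (ℕ × ℤ)) : List (ℕ × ℤ) := (P.map (fun p => (p.1, -p.2))).reverse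

@[simp] lemma rc_length (P : List (ℕ × ℤ)) : (rc P).length = P.length := by
  simp [rc]

lemma rc_append (A B : List (ℕ × ℤ)) : rc (A ++ B) = rc B ++ rc A := by
  simp [rc]

@[simp] lemma rc_rc (P : List (ℕ × ℤ)) : rc (rc P) = P := by
  simp [rc, List.map_reverse, List.map_map, Function.comp_def]

lemma symPath_iff (P : List (ℕ × ℤ)) : SymPath P ↔ P = rc P := by
  unfold SymPath rc
  rw [List.map_reverse]

lemma rc_fst_sum (P : List (ℕ × ℤ)) :
    ((rc P).map Prod.fst).sum = (P.map Prod.fst).sum := by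
  simp [rc, List.map_reverse, List.map_map, List.sum_reverse, Function.comp_def]

lemma sym_mid (Q M : List (ℕ × ℤ)) (hM : rc M = M) : SymPath (Q ++ M ++ rc Q) := by
  rw [symPath_iff, List.append_assoc, rc_append, rc_append, rc_rc, hM, List.append_assoc]

lemma prefix_cases {α : Type*} {A B Q : List α} (h : Q <+: A ++ B) :
    Q <+: A ∨ ∃ R, R <+: B ∧ Q = A ++ R := by
  obtain ⟨T, hT⟩ := h
  rcases List.append_eq_append_iff.mp hT with ⟨a', ha, _⟩ | ⟨c', hQ, hB⟩
  · exact Or.inl ⟨a', ha.symm⟩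
  · exact Or.inr ⟨c', ⟨T, hB.symm⟩, hQ⟩

lemma snd_sum_zero {M : List (ℕ × ℤ)} (h : ∀ p ∈ M, p.2 = 0) :
    (M.map Prod.snd).sum = 0 := by
  apply List.sum_eq_zero
  intro x hx
  obtain ⟨p, hp, rfl⟩ := List.mem_map.mp hx
  exact h p hp

lemma ballot_transfer {k w w' : ℕ} {A B M M' : List (ℕ × ℤ)}
    (hM0 : ∀ p ∈ M, p.2 = 0) (hM'0 : ∀ p ∈ M', p.2 = 0)
    (hM'v : ∀ p ∈ M', ValidStep k p)
    (hw : (M.map Prod.fst).sum + w' = (M'.map Prod.fst).sum + w)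
    (hb : IsBallot k w 0 (A ++ M ++ B)) : IsBallot k w' 0 (A ++ M' ++ B) := by
  obtain ⟨⟨hv, hfst, hsnd⟩, hpre⟩ := hb
  have hAv : ∀ p ∈ A, ValidStep k p := fun p hp => hv p (by simp [hp])
  have hBv : ∀ p ∈ B, ValidStep k p := fun p hp => hv p (by simp [hp])
  have hM0' : (M.map Prod.snd).sum = 0 := snd_sum_zero hM0
  have hM'0' : (M'.map Prod.snd).sum = 0 := snd_sum_zero hM'0
  have hAMB : A <+: A ++ M ++ B := by
    rw [List.append_assoc]; exact A.prefix_append (M ++ B)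
  refine ⟨⟨?_, ?_, ?_⟩, ?_⟩
  · intro p hp
    simp only [List.mem_append] at hp
    rcases hp with (hp | hp) | hp
    · exact hAv p hp
    · exact hM'v p hp
    · exact hBv p hp
  · simp only [List.map_append, List.sum_append] at hfst ⊢
    omega
  · simp only [List.map_append, List.sum_append] at hsnd ⊢
    rw [hM'0']; rw [hM0'] at hsnd; linarith
  · intro Q hQ
    rw [List.append_assoc] at hQ
    rcases prefix_cases hQ with hQA | ⟨R, hR, rfl⟩
    · exact hpre Q (hQA.trans hAMB)
    · rcases prefix_cases hR with hRM | ⟨S, hS, rfl⟩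
      · have hR0 : (R.map Prod.snd).sum = 0 :=
          snd_sum_zero (fun p hp => hM'0 p (hRM.subset hp))
      
        have := hpre A hAMB
        simp only [List.map_append, List.sum_append, hR0, add_zero]
        exact this
      · have hpr : (A ++ M ++ S) <+: A ++ M ++ B := by
          obtain ⟨T, hT⟩ := hS
          exact ⟨T, by rw [List.append_assoc (A ++ M) S T, hT]⟩
        have := hpre (A ++ M ++ S) hpr
        simp only [List.map_append, List.sum_append, hM0', hM'0', add_zero, zero_add]
          at this ⊢
        omega

lemma fst_even {k : ℕ} {P : List (ℕ × ℤ)} (h : ∀ p ∈ P, ValidStep (2 * k) p) :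
    (P.map Prod.fst).sum % 2 = 0 := by
  induction P with
  | nil => simp
  | cons p t ih =>
    have hp := h p (by simp)
    have ht := ih (fun q hq => h q (by simp [hq]))
    have : p.1 % 2 = 0 := by
      rcases hp with ⟨h1, _⟩ | ⟨_, l, _, _, h1⟩ <;> omega
    simp only [List.map_cons, List.sum_cons]
    omega

lemma decompose {P : List (ℕ × ℤ)} (hsym : SymPath P) :
    (∃ Q, P = Q ++ rc Q) ∨ (∃ Q c, Prod.snd (c : ℕ × ℤ) = 0 ∧ P = Q ++ c :: rc Q) := by
  rw [symPath_iff] at hsym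
  set n := P.length / 2 with hn
  have hdrop : ∀ j, j + n = P.length → P.drop j = rc (P.take n) := by
    intro j hj
    conv_lhs => rw [hsym]
    unfold rc
    rw [List.map_take, List.reverse_take]
    congr 1
    simp only [List.length_map]
    omega
  rcases Nat.even_or_odd P.length with he | ho
  · left
    obtain ⟨t, ht⟩ := he
    refine ⟨P.take n, ?_⟩
    conv_lhs => rw [← List.take_append_drop n P]
    rw [hdrop n (by omega)]
  · right
    obtain ⟨t, ht⟩ := ho
    have hnlt : n < P.length := by omega
    have hd : P.drop (n + 1) = rc (P.take n) := hdrop (n + 1) (by omega)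
    have hP2 : P[n]? = ((P.map (fun p => (p.1, -p.2))).reverse)[n]? := by
      conv_lhs => rw [hsym]
      rfl
    rw [List.getElem?_reverse (by simp; omega), List.getElem?_map, List.length_map] at hP2
    have hidx : P.length - 1 - n = n := by omega
    rw [hidx, List.getElem?_eq_getElem hnlt, Option.map_some] at hP2
    have hc : (P[n]'hnlt).2 = 0 := by
      have h2 := congrArg (fun o => (Option.map Prod.snd o).getD 0) hP2
      simp at h2
      omega
    refine ⟨P.take n, P[n]'hnlt, hc, ?_⟩
    conv_lhs => rw [← List.take_append_drop n P]
    rw [List.drop_eq_getElem_cons hnlt, hd]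

/-- forward map: insert or grow the middle horizontal step -/
def fwd (P : List (ℕ × ℤ)) : List (ℕ × ℤ) :=
  if P.length % 2 = 0 then P.take (P.length / 2) ++ (2, 0) :: P.drop (P.length / 2)
  else
    match P.drop (P.length / 2) with
    | [] => []
    | c :: R => P.take (P.length / 2) ++ (c.1 + 2, 0) :: R

/-- backward map: remove or shrink the middle horizontal step -/
def bwd (P : List (ℕ × ℤ)) : List (ℕ × ℤ) :=
  match P.drop (P.length / 2) with
  | [] => []
  | c :: R =>
    if c.1 = 2 then P.take (P.length / 2) ++ R
    else P.take (P.length / 2) ++ (c.1 - 2, 0) :: R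

lemma fwd_even (Q R : List (ℕ × ℤ)) (h : R.length = Q.length) :
    fwd (Q ++ R) = Q ++ (2, 0) :: R := by
  have hlen : (Q ++ R).length = 2 * Q.length := by simp; omega
  have hn : (Q ++ R).length / 2 = Q.length := by omega
  unfold fwd
  rw [if_pos (by omega), hn, List.take_left' rfl, List.drop_left' rfl]

lemma fwd_odd (Q : List (ℕ × ℤ)) (c : ℕ × ℤ) (R : List (ℕ × ℤ)) (h : R.length = Q.length) :
    fwd (Q ++ c :: R) = Q ++ (c.1 + 2, 0) :: R := by
  have hlen : (Q ++ c :: R).length = 2 * Q.length + 1 := by simp; omega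
  have hn : (Q ++ c :: R).length / 2 = Q.length := by omega
  unfold fwd
  rw [if_neg (by omega), hn, List.take_left' rfl, List.drop_left' rfl]

lemma bwd_odd (Q : List (ℕ × ℤ)) (c : ℕ × ℤ) (R : List (ℕ × ℤ)) (h : R.length = Q.length) :
    bwd (Q ++ c :: R) = if c.1 = 2 then Q ++ R else Q ++ (c.1 - 2, 0) :: R := by
  have hlen : (Q ++ c :: R).length = 2 * Q.length + 1 := by simp; omega
  have hn : (Q ++ c :: R).length / 2 = Q.length := by omega
  unfold bwd
  rw [hn, List.take_left' rfl, List.drop_left' rfl]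

lemma horiz_of_mid {k : ℕ} {c : ℕ × ℤ} (hv : ValidStep (2 * k) c) (hc0 : c.2 = 0) :
    ∃ l, 1 ≤ l ∧ l < 2 * k ∧ c.1 = 2 * l := by
  rcases hv with ⟨_, h2⟩ | ⟨_, l, h1, h2, h3⟩
  · rcases h2 with h2 | h2 <;> rw [hc0] at h2 <;> exact absurd h2 (by norm_num)
  · exact ⟨l, h1, h2, h3⟩

lemma fwd_spec {m k : ℕ} (hk : 0 < k) {P : List (ℕ × ℤ)}
    (hb : IsBallot (2 * k) (2 * (2 * m)) 0 P) (hs : SymPath P) :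
    IsBallot (2 * k) (2 * (2 * m + 1)) 0 (fwd P) ∧ SymPath (fwd P) := by
  rcases decompose hs with ⟨Q, rfl⟩ | ⟨Q, c, hc0, rfl⟩
  · rw [fwd_even Q (rc Q) (rc_length Q)]
    have h1 : IsBallot (2 * k) (2 * (2 * m + 1)) 0 (Q ++ [((2:ℕ), (0:ℤ))] ++ rc Q) := by
      refine ballot_transfer (M := []) (w := 2 * (2 * m)) (by simp) (by simp) ?_ (by simp; omega) (by simpa using hb)
      intro p hp
      simp at hp
      subst hp
      exact Or.inr ⟨rfl, 1, le_refl 1, by omega, rfl⟩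
    refine ⟨by simpa using h1, ?_⟩
    have := sym_mid Q [((2:ℕ), (0:ℤ))] (by simp [rc])
    simpa using this
  · have hcv : ValidStep (2 * k) c := hb.1.1 c (by simp)
    obtain ⟨l, hl1, hl2, hl3⟩ := horiz_of_mid hcv hc0
    -- parity: l is even
    have hQv : ∀ p ∈ Q, ValidStep (2 * k) p := fun p hp => hb.1.1 p (by simp [hp])
    have hQe : (Q.map Prod.fst).sum % 2 = 0 := fst_even hQv
    have hw : ((Q ++ c :: rc Q).map Prod.fst).sum = 2 * (2 * m) := hb.1.2.1
    have hsum : (Q.map Prod.fst).sum + c.1 + (Q.map Prod.fst).sum = 2 * (2 * m) := by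
      simp only [List.map_append, List.sum_append, List.map_cons, List.sum_cons,
        rc_fst_sum] at hw
      omega
    have hleven : l % 2 = 0 := by omega
    have hllt : l + 1 < 2 * k := by omega
    rw [fwd_odd Q c (rc Q) (rc_length Q)]
    have h1 : IsBallot (2 * k) (2 * (2 * m + 1)) 0 (Q ++ [(c.1 + 2, (0:ℤ))] ++ rc Q) := by
      refine ballot_transfer (M := [c]) (w := 2 * (2 * m)) (by simpa using hc0) (by simp) ?_
        (by simp; omega) (by simpa using hb)
      intro p hp
      simp at hp
      subst hp
      exact Or.inr ⟨rfl, l + 1, by omega, hllt, by omega⟩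
    refine ⟨by simpa using h1, ?_⟩
    have := sym_mid Q [(c.1 + 2, (0:ℤ))] (by simp [rc])
    simpa using this

lemma odd_decomp {m k : ℕ} {P : List (ℕ × ℤ)}
    (hb : IsBallot (2 * k) (2 * (2 * m + 1)) 0 P) (hs : SymPath P) :
    ∃ Q c, Prod.snd (c : ℕ × ℤ) = 0 ∧ P = Q ++ c :: rc Q := by
  rcases decompose hs with ⟨Q, rfl⟩ | h
  · exfalso
    have hQv : ∀ p ∈ Q, ValidStep (2 * k) p := fun p hp => hb.1.1 p (by simp [hp])
    have hQe : (Q.map Prod.fst).sum % 2 = 0 := fst_even hQv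
    have hw : ((Q ++ rc Q).map Prod.fst).sum = 2 * (2 * m + 1) := hb.1.2.1
    simp only [List.map_append, List.sum_append, rc_fst_sum] at hw
    omega
  · exact h

lemma bwd_spec {m k : ℕ} (hk : 0 < k) {P : List (ℕ × ℤ)}
    (hb : IsBallot (2 * k) (2 * (2 * m + 1)) 0 P) (hs : SymPath P) :
    IsBallot (2 * k) (2 * (2 * m)) 0 (bwd P) ∧ SymPath (bwd P) := by
  obtain ⟨Q, c, hc0, rfl⟩ := odd_decomp hb hs
  have hcv : ValidStep (2 * k) c := hb.1.1 c (by simp)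
  obtain ⟨l, hl1, hl2, hl3⟩ := horiz_of_mid hcv hc0
  rw [bwd_odd Q c (rc Q) (rc_length Q)]
  split_ifs with h2
  · have h1 : IsBallot (2 * k) (2 * (2 * m)) 0 (Q ++ ([] : List (ℕ × ℤ)) ++ rc Q) := by
      exact ballot_transfer (M := [c]) (w := 2 * (2 * m + 1)) (by simpa using hc0) (by simp)
        (by simp) (by simp; omega) (by simpa using hb)
    refine ⟨by simpa using h1, ?_⟩
    have := sym_mid Q [] (by simp [rc])
    simpa using this
  · have hl2' : 2 ≤ l := by omega
    have h1 : IsBallot (2 * k) (2 * (2 * m)) 0 (Q ++ [(c.1 - 2, (0:ℤ))] ++ rc Q) := by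
      refine ballot_transfer (M := [c]) (w := 2 * (2 * m + 1)) (by simpa using hc0) (by simp) ?_
        (by simp; omega) (by simpa using hb)
      intro p hp
      simp at hp
      subst hp
      exact Or.inr ⟨rfl, l - 1, by omega, by omega, by omega⟩
    refine ⟨by simpa using h1, ?_⟩
    have := sym_mid Q [(c.1 - 2, (0:ℤ))] (by simp [rc])
    simpa using this

lemma bwd_fwd {m k : ℕ} {P : List (ℕ × ℤ)}
    (hb : IsBallot (2 * k) (2 * (2 * m)) 0 P) (hs : SymPath P) : bwd (fwd P) = P := by
  rcases decompose hs with ⟨Q, rfl⟩ | ⟨Q, c, hc0, rfl⟩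
  · rw [fwd_even Q (rc Q) (rc_length Q), bwd_odd Q ((2:ℕ), (0:ℤ)) (rc Q) (rc_length Q),
      if_pos rfl]
  · have hcv : ValidStep (2 * k) c := hb.1.1 c (by simp)
    obtain ⟨l, hl1, hl2, hl3⟩ := horiz_of_mid hcv hc0
    rw [fwd_odd Q c (rc Q) (rc_length Q), bwd_odd Q (c.1 + 2, (0:ℤ)) (rc Q) (rc_length Q),
      if_neg (by simp; omega)]
    have : ((c.1 + 2 : ℕ) - 2, (0:ℤ)) = c := by
      apply Prod.ext
      · simp
      · simp [hc0]
    rw [this]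

lemma fwd_bwd {m k : ℕ} {P : List (ℕ × ℤ)}
    (hb : IsBallot (2 * k) (2 * (2 * m + 1)) 0 P) (hs : SymPath P) : fwd (bwd P) = P := by
  obtain ⟨Q, c, hc0, rfl⟩ := odd_decomp hb hs
  have hcv : ValidStep (2 * k) c := hb.1.1 c (by simp)
  obtain ⟨l, hl1, hl2, hl3⟩ := horiz_of_mid hcv hc0
  rw [bwd_odd Q c (rc Q) (rc_length Q)]
  split_ifs with h2
  · rw [fwd_even Q (rc Q) (rc_length Q)]
    have : ((2:ℕ), (0:ℤ)) = c := by
      apply Prod.ext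
      · simp [h2]
      · simp [hc0]
    rw [this]
  · rw [fwd_odd Q (c.1 - 2, (0:ℤ)) (rc Q) (rc_length Q)]
    have : ((c.1 - 2 : ℕ) + 2, (0:ℤ)) = c := by
      apply Prod.ext
      · simp; omega
      · simp [hc0]
    rw [this]

end Stmt12Aux

theorem stmt12 (m k : ℕ) (hm : 0 < m) (hk : 0 < k) :
    Nonempty ({P : List (ℕ × ℤ) // IsBallot (2 * k) (2 * (2 * m)) 0 P ∧ SymPath P} ≃
      {P : List (ℕ × ℤ) // IsBallot (2 * k) (2 * (2 * m + 1)) 0 P ∧ SymPath P}) := by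
  exact ⟨⟨fun P => ⟨Stmt12Aux.fwd P.1, (Stmt12Aux.fwd_spec hk P.2.1 P.2.2).1,
      (Stmt12Aux.fwd_spec hk P.2.1 P.2.2).2⟩,
    fun P => ⟨Stmt12Aux.bwd P.1, (Stmt12Aux.bwd_spec hk P.2.1 P.2.2).1,
      (Stmt12Aux.bwd_spec hk P.2.1 P.2.2).2⟩,
    fun P => Subtype.ext (Stmt12Aux.bwd_fwd P.2.1 P.2.2),
    fun P => Subtype.ext (Stmt12Aux.fwd_bwd P.2.1 P.2.2)⟩⟩
end

section
/- The set of order ideals of P'(2m+2, 2k+1) that do not contain the element (m+1, 0) (and contain no pair (a,0), (a',−1) with |a−a'| ≤ k+1/2) equals the set of order ideals of P'(2m+1, 2k+1) (with the same forbidden-pair condition). -/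
open Relation

/-! For odd `k`, passing from `s = 2m+1` to `s = 2m+2` leaves `R'` unchanged (reindex
`i ↦ i + 1`) and adds to `L'` only the column `i = m + 1`, the points `(m + 1 - kj/2, j)`.
These form a chain above `(m + 1, 0)`, so an ideal of `P'(2m+2, k)` avoiding `(m + 1, 0)` lies in
`P'(2m+1, k)`. Conversely a new point at level `j` is more than `k/2` away from every old point
at level `j + 1`, so nothing new lies below an old point and ideals of `P'(2m+1, k)` stay ideals. -/

section

variable {m k : ℕ}

lemma R'set_two_mul_add_two (hk : Odd k) : R'set (2 * m + 2) k = R'set (2 * m + 1) k := by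
  obtain ⟨r, rfl⟩ := hk
  ext p
  constructor
  · rintro ⟨j, i, hlo, hhi, rfl⟩
    refine ⟨j, i - 1, by omega, by omega, ?_⟩
    ext <;> push_cast [Nat.cast_sub (show 1 ≤ i by omega)] <;> ring
  · rintro ⟨j, i, hlo, hhi, rfl⟩
    refine ⟨j, i + 1, by omega, by omega, ?_⟩
    ext <;> push_cast <;> ring

lemma L'set_mono {s s' : ℕ} (h : s ≤ s') : L'set s k ⊆ L'set s' k := by
  rintro p ⟨j, i, hlo, hhi, rfl⟩
  exact ⟨j, i, hlo, hhi.trans (Nat.div_le_div_right h), rfl⟩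

def newPoint (m k j : ℕ) : ℚ × ℤ := ((m : ℚ) + 1 - (k : ℚ) / 2 * j, (j : ℤ))

lemma newPoint_mem (j : ℕ) (hj : j * k ≤ m) : newPoint m k j ∈ L'set (2 * m + 2) k :=
  ⟨j, m + 1, by omega, by omega, by simp [newPoint]⟩

lemma eq_newPoint_of_mem_L'set {p : ℚ × ℤ} (hp : p ∈ L'set (2 * m + 2) k)
    (hp' : p ∉ L'set (2 * m + 1) k) : ∃ j, j * k ≤ m ∧ p = newPoint m k j := by
  obtain ⟨j, i, hlo, hhi, rfl⟩ := hp
  obtain rfl : i = m + 1 := by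
    by_contra hne
    exact hp' ⟨j, i, hlo, by omega, rfl⟩
  exact ⟨j, by omega, by simp [newPoint]⟩

lemma P'le_newPoint (j : ℕ) (hj : j * k ≤ m) :
    P'le (2 * m + 2) k ((m : ℚ) + 1, (0 : ℤ)) (newPoint m k j) := by
  induction j with
  | zero =>
    simp only [newPoint, CharP.cast_eq_zero, mul_zero, sub_zero]
    exact ReflTransGen.refl
  | succ j ih =>
    have hj' : j * k ≤ m := le_trans (Nat.mul_le_mul_right _ j.le_succ) hj
    refine (ih hj').tail (Or.inl ⟨newPoint_mem j hj', newPoint_mem (j + 1) hj, ?_, ?_⟩)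
    · have : (newPoint m k (j + 1)).1 - (newPoint m k j).1 = -((k : ℚ) / 2) := by
        simp only [newPoint]; push_cast; ring
      rw [this, abs_neg, abs_of_nonneg (by positivity)]
    · simp [newPoint]

lemma top_not_mem_P'set : ((m : ℚ) + 1, (0 : ℤ)) ∉ P'set (2 * m + 1) k := by
  rintro (⟨j, i, -, hhi, hp⟩ | ⟨j, i, -, -, hp⟩)
  · obtain ⟨h1, h2⟩ := Prod.ext_iff.mp hp
    obtain rfl : j = 0 := by simpa using h2.symm
    have : m + 1 = i := by exact_mod_cast (by simpa using h1 : (m : ℚ) + 1 = i)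
    omega
  · have := congrArg Prod.snd hp
    simp at this
    omega

lemma P'cov_two_mul_add_two (hk : Odd k) {p q : ℚ × ℤ} (h : P'cov (2 * m + 1) k p q) :
    P'cov (2 * m + 2) k p q := by
  rw [P'cov, R'set_two_mul_add_two hk]
  rcases h with ⟨hp, hq, h⟩ | h
  · exact Or.inl ⟨L'set_mono (by omega) hp, L'set_mono (by omega) hq, h⟩
  · exact Or.inr h

lemma P'cov_two_mul_add_one (hk : Odd k) {p q : ℚ × ℤ} (h : P'cov (2 * m + 2) k p q)
    (hq : q ∈ P'set (2 * m + 1) k) : P'cov (2 * m + 1) k p q := by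
  rw [P'cov, R'set_two_mul_add_two hk] at h
  rcases h with ⟨hp, hq', hdist, hlevel⟩ | h
  · have hqL : q ∈ L'set (2 * m + 1) k := by
      refine hq.resolve_right ?_
      rintro ⟨j, i, -, -, rfl⟩
      obtain ⟨j', i', -, -, hq'⟩ := hq'
      have := congrArg Prod.snd hq'
      simp at this
      omega
    refine Or.inl ⟨?_, hqL, hdist, hlevel⟩
    by_contra hpL
    obtain ⟨j, -, rfl⟩ := eq_newPoint_of_mem_L'set hp hpL
    obtain ⟨j', i', -, hi', rfl⟩ := hqL
    obtain rfl : j' = j + 1 := by simp [newPoint] at hlevel; exact_mod_cast hlevel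
    -- `q` lies in a column `i' ≤ m`, so it is more than `k/2` to the left of `p`
    have hi'm : (i' : ℚ) ≤ m := by exact_mod_cast (show i' ≤ m by omega)
    have := (abs_le.mp hdist).1
    simp only [newPoint] at this
    push_cast at this
    linarith
  · exact Or.inr h

lemma P'le_two_mul_add_two (hk : Odd k) {p q : ℚ × ℤ} (h : P'le (2 * m + 1) k p q) :
    P'le (2 * m + 2) k p q :=
  ReflTransGen.mono (fun _ _ => P'cov_two_mul_add_two hk) _ _ h

lemma IsIdealP'.mem_of_P'le_two_mul_add_two (hk : Odd k) {I : Set (ℚ × ℤ)}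
    (hI : IsIdealP' (2 * m + 1) k I) {p q : ℚ × ℤ} (h : P'le (2 * m + 2) k p q) (hq : q ∈ I) :
    p ∈ I := by
  induction h using ReflTransGen.head_induction_on with
  | refl => exact hq
  | head hcov _ ih => exact hI.2 _ ih _ (.single (P'cov_two_mul_add_one hk hcov (hI.1 ih)))

lemma P'set_two_mul_add_one_subset (hk : Odd k) : P'set (2 * m + 1) k ⊆ P'set (2 * m + 2) k := by
  rintro p (hpL | hpR)
  · exact Or.inl (L'set_mono (by omega) hpL)
  · exact Or.inr (R'set_two_mul_add_two hk ▸ hpR)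

lemma IsIdealP'.lift_two_mul_add_two (hk : Odd k) {I : Set (ℚ × ℤ)}
    (hI : IsIdealP' (2 * m + 1) k I) : IsIdealP' (2 * m + 2) k I :=
  ⟨hI.1.trans (P'set_two_mul_add_one_subset hk),
    fun _ hq _ hle => hI.mem_of_P'le_two_mul_add_two hk hle hq⟩

lemma IsIdealP'.restrict_two_mul_add_one (hk : Odd k) {I : Set (ℚ × ℤ)}
    (hI : IsIdealP' (2 * m + 2) k I) (htop : ((m : ℚ) + 1, (0 : ℤ)) ∉ I) :
    IsIdealP' (2 * m + 1) k I := by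
  refine ⟨fun p hp => ?_, fun q hq p hle => hI.2 q hq p (P'le_two_mul_add_two hk hle)⟩
  rcases hI.1 hp with hpL | hpR
  · by_contra hp'
    obtain ⟨j, hj, rfl⟩ := eq_newPoint_of_mem_L'set hpL (fun h => hp' (Or.inl h))
    exact htop (hI.2 _ hp _ (P'le_newPoint j hj))
  · exact Or.inr (R'set_two_mul_add_two hk ▸ hpR)

end

theorem stmt18_general (m k : ℕ) :
    {I | I ∈ Jset (2 * m + 2) (2 * k + 1) ∧ ((m : ℚ) + 1, (0 : ℤ)) ∉ I} =
      Jset (2 * m + 1) (2 * k + 1) := by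
  have hk : Odd (2 * k + 1) := odd_two_mul_add_one k
  ext I
  constructor
  · rintro ⟨⟨hI, hpair⟩, htop⟩
    exact ⟨hI.restrict_two_mul_add_one hk htop, hpair⟩
  · rintro ⟨hI, hpair⟩
    exact ⟨⟨hI.lift_two_mul_add_two hk, hpair⟩, fun htop => top_not_mem_P'set (hI.1 htop)⟩

theorem stmt18 (m k : ℕ) (hm : 0 < m) (hk : 0 < k) :
    {I | I ∈ Jset (2 * m + 2) (2 * k + 1) ∧ ((m : ℚ) + 1, (0 : ℤ)) ∉ I} =
      Jset (2 * m + 1) (2 * k + 1) :=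
  stmt18_general m k
end
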